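/- arXiv:2503.13044 — 7 statements merged into one kernel-verified Lean document; each statement's English description precedes it below -/
import Mathlib

section
/- Under Assumption 1, the spectral radius of the matrix ΛP is strictly less than 1; in particular, the matrix I − ΛP is invertible. -/
/-!
Write `A = ΛP`. Since `A ≥ 0` and `A 1 ≤ 1`, the row sums `A^k 1` decrease with `k`, and a
positive entry `(P^k)_{vw}` with `λ_w < 1` forces `(A^{k+1} 1)_v < 1`: the mass lost at `w` is
lost along every path leading to `w`. Taking `k` large enough for all `v` at once gives
`‖A^m‖ < 1` in the max-row-sum norm, so Gelfand's bound `ρ(A) ≤ ‖A^m‖^{1/m}` yields `ρ(A) < 1`,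
and `1` is not in the spectrum.
-/

open Matrix

/-- The spectral radius of a square real matrix: the supremum of the moduli of its
complex eigenvalues (elements of the complex spectrum of the complexified matrix). -/
noncomputable def specRad {N : ℕ} (M : Matrix (Fin N) (Fin N) ℝ) : ENNReal :=
  spectralRadius ℂ (M.map (algebraMap ℝ ℂ))

open scoped NNReal ENNReal

attribute [local instance] Matrix.linftyOpNormedRing Matrix.linftyOpNormedAlgebra

section SpectralRadius

variable {𝕜 A : Type*} [NormedField 𝕜] [NormedRing A] [NormedAlgebra 𝕜 A]

theorem spectralRadius_lt_one_of_nnnorm_pow_lt_one [CompleteSpace A] [NormOneClass A] {a : A}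
    {m : ℕ} (h : ‖a ^ (m + 1)‖₊ < 1) : spectralRadius 𝕜 a < 1 :=
  calc spectralRadius 𝕜 a ≤ (‖a ^ (m + 1)‖₊ : ℝ≥0∞) ^ (1 / (m + 1) : ℝ) := by
        simpa using spectrum.spectralRadius_le_pow_nnnorm_pow_one_div 𝕜 a m
    _ < 1 := ENNReal.rpow_lt_one (mod_cast h) (by positivity)

theorem isUnit_one_sub_of_spectralRadius_lt_one {a : A} (h : spectralRadius 𝕜 a < 1) :
    IsUnit (1 - a) := by
  have h1 := spectrum.mem_resolventSet_of_spectralRadius_lt (k := (1 : 𝕜)) (by simpa using h)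
  rwa [spectrum.mem_resolventSet_iff, map_one] at h1

end SpectralRadius

namespace Matrix

section OrderedSemiring

variable {m n R : Type*} [Fintype n] [Semiring R] [PartialOrder R] [IsOrderedRing R]

theorem monotone_mulVec_of_nonneg {A : Matrix m n R} (hA : ∀ i j, 0 ≤ A i j) :
    Monotone (A *ᵥ ·) :=
  fun _ _ hxy i => Finset.sum_le_sum fun j _ => mul_le_mul_of_nonneg_left (hxy j) (hA i j)

theorem antitone_pow_mulVec_one [DecidableEq n] {A : Matrix n n R} (hA : ∀ i j, 0 ≤ A i j)
    (hA1 : A *ᵥ 1 ≤ 1) : Antitone fun k : ℕ => A ^ k *ᵥ 1 := by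
  refine antitone_nat_of_succ_le fun k => ?_
  induction k with
  | zero => simpa using hA1
  | succ k ih => simpa only [mulVec_mulVec, ← pow_succ'] using monotone_mulVec_of_nonneg hA ih

end OrderedSemiring

section LinearOrderedRing

variable {n R : Type*} [Fintype n] [DecidableEq n] [Ring R] [LinearOrder R] [IsStrictOrderedRing R]
  {P : Matrix n n R}

theorem mulVec_apply_lt_one_of_mem_rowStochastic (hP : P ∈ rowStochastic R n) {x : n → R}
    (hx : x ≤ 1) {v u : n} (hvu : 0 < P v u) (hxu : x u < 1) : (P *ᵥ x) v < 1 :=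
  calc (P *ᵥ x) v = ∑ j, P v j * x j := rfl
    _ < ∑ j, P v j * 1 :=
      Finset.sum_lt_sum
        (fun j _ => mul_le_mul_of_nonneg_left (hx j) (nonneg_of_mem_rowStochastic hP))
        ⟨u, Finset.mem_univ u, mul_lt_mul_of_pos_left hxu hvu⟩
    _ = 1 := by simp [sum_row_of_mem_rowStochastic hP]

variable {d : n → R}

theorem diagonal_mul_mulVec_one (hP : P ∈ rowStochastic R n) : (diagonal d * P) *ᵥ 1 = d := by
  ext i
  simp [← mulVec_mulVec, one_vecMul_of_mem_rowStochastic hP, mulVec_diagonal]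

theorem diagonal_mul_apply_nonneg (hd : 0 ≤ d) (hP : P ∈ rowStochastic R n) (i j : n) :
    0 ≤ (diagonal d * P) i j := by
  rw [diagonal_mul]
  exact mul_nonneg (hd i) (nonneg_of_mem_rowStochastic hP)

theorem diagonal_mul_mulVec_apply_lt_one (hd0 : 0 ≤ d) (hd1 : d ≤ 1)
    (hP : P ∈ rowStochastic R n) {x : n → R} (hx : x ≤ 1) {v u : n} (hvu : 0 < P v u)
    (hxu : x u < 1) : ((diagonal d * P) *ᵥ x) v < 1 := by
  have hPx := mulVec_apply_lt_one_of_mem_rowStochastic hP hx hvu hxu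
  rw [← mulVec_mulVec, mulVec_diagonal]
  rcases le_or_gt 0 ((P *ᵥ x) v) with h | h
  · exact (mul_le_of_le_one_left h (hd1 v)).trans_lt hPx
  · exact (mul_nonpos_of_nonneg_of_nonpos (hd0 v) h.le).trans_lt one_pos

theorem pow_succ_mulVec_one_apply_lt_one (hd0 : 0 ≤ d) (hd1 : d ≤ 1)
    (hP : P ∈ rowStochastic R n) {w : n} (hw : d w < 1) {k : ℕ} {v : n}
    (hvw : 0 < (P ^ k) v w) : ((diagonal d * P) ^ (k + 1) *ᵥ 1) v < 1 := by
  induction k generalizing v with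
  | zero =>
    obtain rfl : v = w := by
      by_contra h
      simp [one_apply_ne h] at hvw
    simpa [diagonal_mul_mulVec_one hP] using hw
  | succ k ih =>
    have hPk := pow_mem hP k
    rw [pow_succ', mul_apply] at hvw
    obtain ⟨u, -, hu⟩ := (Finset.sum_pos_iff_of_nonneg fun u _ => mul_nonneg
      (nonneg_of_mem_rowStochastic hP) (nonneg_of_mem_rowStochastic hPk)).1 hvw
    have hvu : 0 < P v u := pos_of_mul_pos_left hu (nonneg_of_mem_rowStochastic hPk)
    have huw : 0 < (P ^ k) u w := pos_of_mul_pos_right hu (nonneg_of_mem_rowStochastic hP)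
    have hA1 : (diagonal d * P) *ᵥ 1 ≤ 1 := (diagonal_mul_mulVec_one hP).trans_le hd1
    have hle : (diagonal d * P) ^ (k + 1) *ᵥ 1 ≤ 1 := by
      simpa using antitone_pow_mulVec_one (diagonal_mul_apply_nonneg hd0 hP) hA1 (Nat.zero_le _)
    rw [pow_succ', ← mulVec_mulVec]
    exact diagonal_mul_mulVec_apply_lt_one hd0 hd1 hP hle hvu (ih huw)

end LinearOrderedRing

variable {n : Type*} [Fintype n] [DecidableEq n]

theorem linfty_opNNNorm_map_algebraMap {𝕜 𝕜' : Type*} [NormedField 𝕜] [NormedRing 𝕜']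
    [NormedAlgebra 𝕜 𝕜'] [NormOneClass 𝕜'] (M : Matrix n n 𝕜) :
    ‖M.map (algebraMap 𝕜 𝕜')‖₊ = ‖M‖₊ := by
  simp [linfty_opNNNorm_def]

theorem linfty_opNNNorm_lt_one_of_nonneg {A : Matrix n n ℝ} (hA : ∀ i j, 0 ≤ A i j)
    (h : ∀ i, (A *ᵥ 1) i < 1) : ‖A‖₊ < 1 := by
  rw [linfty_opNNNorm_def, Finset.sup_lt_iff zero_lt_one]
  intro i _
  rw [← NNReal.coe_lt_coe]
  push_cast
  simpa [Real.norm_of_nonneg (hA i _), mulVec, dotProduct] using h i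

theorem exists_nnnorm_pow_diagonal_mul_lt_one {d : n → ℝ} {P : Matrix n n ℝ} (hd0 : 0 ≤ d)
    (hd1 : d ≤ 1) (hP : P ∈ rowStochastic ℝ n)
    (hconn : ∀ v, ∃ w k, d w < 1 ∧ 0 < (P ^ k) v w) :
    ∃ m, ‖(diagonal d * P) ^ (m + 1)‖₊ < 1 := by
  choose w k hw hk using hconn
  have hA := diagonal_mul_apply_nonneg hd0 hP
  have hA1 : (diagonal d * P) *ᵥ 1 ≤ 1 := (diagonal_mul_mulVec_one hP).trans_le hd1
  refine ⟨Finset.univ.sup k,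
    linfty_opNNNorm_lt_one_of_nonneg (pow_apply_nonneg hA _) fun v => ?_⟩
  calc _ ≤ ((diagonal d * P) ^ (k v + 1) *ᵥ 1) v :=
        antitone_pow_mulVec_one hA hA1 (by gcongr; exact Finset.le_sup (Finset.mem_univ v)) v
    _ < 1 := pow_succ_mulVec_one_apply_lt_one hd0 hd1 hP (hw v) (hk v)

end Matrix

/-- Under Assumption 1 (connectivity), the spectral radius of `Λ * P` is strictly
less than `1`; in particular, `I - Λ * P` is invertible. -/
theorem stmt0 (N : ℕ) (hN : 1 ≤ N)
    (P Λ : Matrix (Fin N) (Fin N) ℝ)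
    (hPnn : ∀ i j, 0 ≤ P i j)
    (hProw : ∀ i, ∑ j, P i j = 1)
    (hΛdiag : Λ.IsDiag)
    (hΛ : ∀ i, Λ i i ∈ Set.Icc (0 : ℝ) 1)
    (hconn : ∀ v : Fin N, ∃ (w : Fin N) (k : ℕ), Λ w w < 1 ∧ 0 < (P ^ k) v w) :
    specRad (Λ * P) < 1 ∧ IsUnit (1 - Λ * P) := by
  -- makes `‖1‖ = 1` in the max-row-sum norm
  have : Nonempty (Fin N) := ⟨⟨0, hN⟩⟩
  obtain ⟨m, hm⟩ := exists_nnnorm_pow_diagonal_mul_lt_one (d := Λ.diag) (fun i => (hΛ i).1)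
    (fun i => (hΛ i).2) (mem_rowStochastic_iff_sum.2 ⟨hPnn, hProw⟩) hconn
  rw [hΛdiag.diagonal_diag] at hm
  have hreal : spectralRadius ℝ (Λ * P) < 1 := spectralRadius_lt_one_of_nnnorm_pow_lt_one hm
  refine ⟨spectralRadius_lt_one_of_nnnorm_pow_lt_one (m := m) ?_,
    isUnit_one_sub_of_spectralRadius_lt_one hreal⟩
  rwa [← Matrix.map_pow, linfty_opNNNorm_map_algebraMap]
end

section
/- If the spectral radius of ΛP is strictly less than 1, then the matrix W = (I − ΛP)^{-1}(I − Λ) is entrywise nonnegative and row-stochastic, i.e., W·𝟙 = 𝟙 where 𝟙 is the all-ones vector. Consequently, W maps the cube [0,1]^N into itself. -/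
/-!
Gelfand's formula turns `ρ(ΛP) < 1` into `(ΛP)ᵏ → 0`. Then `I - ΛP` is invertible and its inverse
is the limit of the partial sums `∑_{k<n} (ΛP)ᵏ`, hence entrywise nonnegative, so `W` is too.
Since `ΛP 𝟙 + (I - Λ) 𝟙 = Λ 𝟙 + 𝟙 - Λ 𝟙 = 𝟙`, we get `(I - Λ) 𝟙 = (I - ΛP) 𝟙` and so `W 𝟙 = 𝟙`.
A nonnegative matrix fixing `𝟙` maps the cube `[0,1]^N` into itself.
-/

open Matrix

open Filter Topology Finset

theorem tendsto_pow_atTop_nhds_zero_of_spectralRadius_lt_one {A : Type*} [NormedRing A]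
    [NormedAlgebra ℂ A] [CompleteSpace A] {a : A} (h : spectralRadius ℂ a < 1) :
    Tendsto (a ^ ·) atTop (𝓝 0) := by
  obtain ⟨r, hρr, hr1⟩ := ENNReal.lt_iff_exists_nnreal_btwn.mp h
  have hr1 : r < 1 := by exact_mod_cast hr1
  have hbound : ∀ᶠ n : ℕ in atTop, ‖a ^ n‖ ≤ (r : ℝ) ^ n := by
    filter_upwards [(spectrum.gelfand_formula a).eventually_lt_const hρr,
      eventually_gt_atTop 0] with n hn hn0
    have hn0 : (0 : ℝ) < n := by exact_mod_cast hn0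
    rw [one_div, ENNReal.rpow_inv_lt_iff hn0, ENNReal.rpow_natCast] at hn
    exact_mod_cast hn.le
  exact squeeze_zero_norm' hbound (tendsto_pow_atTop_nhds_zero_of_lt_one r.2 hr1)

theorem tendsto_pow_atTop_nhds_zero_of_specRad_lt_one {N : ℕ} {A : Matrix (Fin N) (Fin N) ℝ}
    (h : specRad A < 1) : Tendsto (A ^ ·) atTop (𝓝 0) := by
  let _ := Matrix.linftyOpNormedRing (n := Fin N) (α := ℂ)
  let _ := Matrix.linftyOpNormedAlgebra (n := Fin N) (R := ℂ) (α := ℂ)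
  have hM := tendsto_pow_atTop_nhds_zero_of_spectralRadius_lt_one h
  have hre : Continuous fun B : Matrix (Fin N) (Fin N) ℂ => B.map Complex.re :=
    continuous_id.matrix_map Complex.continuous_re
  have hpow : ∀ n : ℕ, (A.map (algebraMap ℝ ℂ) ^ n).map Complex.re = A ^ n := fun n => by
    rw [← RingHom.mapMatrix_apply, ← map_pow]
    ext i j
    simp
  simpa only [Function.comp_def, hpow, Matrix.map_zero _ Complex.zero_re] using
    (hre.tendsto 0).comp hM

theorem isUnit_det_one_sub_of_tendsto_pow {n K : Type*} [Fintype n] [DecidableEq n] [Field K]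
    [TopologicalSpace K] [IsTopologicalRing K] [T2Space K] {A : Matrix n n K}
    (h : Tendsto (A ^ ·) atTop (𝓝 0)) : IsUnit (1 - A).det := by
  rw [isUnit_iff_ne_zero]
  intro hdet
  obtain ⟨v, hv0, hv⟩ := Matrix.exists_mulVec_eq_zero_iff.mpr hdet
  have hfix : ∀ k : ℕ, (A ^ k) *ᵥ v = v := by
    rw [sub_mulVec, one_mulVec, sub_eq_zero] at hv
    intro k
    induction k with
    | zero => simp
    | succ k ih => rw [pow_succ, ← mulVec_mulVec, ← hv, ih]
  have hlim : Tendsto (fun k : ℕ => (A ^ k) *ᵥ v) atTop (𝓝 0) := by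
    simpa [Function.comp_def] using
      ((continuous_id.matrix_mulVec continuous_const).tendsto 0).comp h
  simp only [hfix] at hlim
  exact hv0 (tendsto_nhds_unique tendsto_const_nhds hlim)

theorem tendsto_geom_sum_of_tendsto_pow {R : Type*} [Ring R] [TopologicalSpace R]
    [IsTopologicalRing R] {a b : R} (hb : (1 - a) * b = 1) (h : Tendsto (a ^ ·) atTop (𝓝 0)) :
    Tendsto (fun n => ∑ k ∈ range n, a ^ k) atTop (𝓝 b) := by
  have hsum : ∀ n, ∑ k ∈ range n, a ^ k = (1 - a ^ n) * b := fun n => by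
    rw [← geom_sum_mul_neg, mul_assoc, hb, mul_one]
  simpa [hsum] using ((tendsto_const_nhds (x := 1)).sub h).mul_const b

section OrderedField

variable {n K : Type*} [Fintype n] [DecidableEq n] [Field K] [LinearOrder K]
  [IsStrictOrderedRing K] [TopologicalSpace K] [IsTopologicalRing K] [OrderClosedTopology K]

theorem nonsing_inv_one_sub_apply_nonneg {A : Matrix n n K} (hA : ∀ i j, 0 ≤ A i j)
    (h : Tendsto (A ^ ·) atTop (𝓝 0)) (i j : n) : 0 ≤ (1 - A)⁻¹ i j := by
  have hgeom := tendsto_geom_sum_of_tendsto_pow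
    (mul_nonsing_inv _ (isUnit_det_one_sub_of_tendsto_pow h)) h
  refine ge_of_tendsto' ((hgeom.apply_nhds i).apply_nhds j) fun m => ?_
  rw [Matrix.sum_apply]
  exact sum_nonneg fun k _ => pow_apply_nonneg hA k i j

/-- In Markov-chain terms: a chain that at each step moves by `A` or is absorbed by `B` is
absorbed with probability one when `A ^ k → 0`, and `(1 - A)⁻¹ * B` is its absorption law. -/
theorem nonsing_inv_one_sub_mul_mem_rowStochastic {A B : Matrix n n K} (hA : ∀ i j, 0 ≤ A i j)
    (hB : ∀ i j, 0 ≤ B i j) (hAB : (A + B) *ᵥ 1 = 1) (h : Tendsto (A ^ ·) atTop (𝓝 0)) :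
    (1 - A)⁻¹ * B ∈ rowStochastic K n := by
  refine mem_rowStochastic.2 ⟨fun i j => ?_, ?_⟩
  · exact sum_nonneg fun k _ => mul_nonneg (nonsing_inv_one_sub_apply_nonneg hA h i k) (hB k j)
  · have hB1 : B *ᵥ 1 = (1 - A) *ᵥ 1 := by
      rw [add_mulVec] at hAB
      rw [sub_mulVec, one_mulVec]
      exact eq_sub_of_add_eq' hAB
    rw [← mulVec_mulVec, hB1, mulVec_mulVec,
      nonsing_inv_mul _ (isUnit_det_one_sub_of_tendsto_pow h), one_mulVec]

end OrderedField

theorem mulVec_mem_Icc_of_mem_rowStochastic {n R : Type*} [Fintype n] [DecidableEq n]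
    [Semiring R] [PartialOrder R] [IsOrderedRing R] {M : Matrix n n R}
    (hM : M ∈ rowStochastic R n) {x : n → R} (hx : ∀ i, x i ∈ Set.Icc 0 1) (i : n) :
    (M *ᵥ x) i ∈ Set.Icc 0 1 := by
  refine ⟨nonneg_mulVec_of_mem_rowStochastic hM (fun j => (hx j).1) i, ?_⟩
  calc (M *ᵥ x) i ≤ (M *ᵥ 1) i :=
        sum_le_sum fun j _ => mul_le_mul_of_nonneg_left (hx j).2 (hM.1 i j)
    _ = 1 := by rw [one_vecMul_of_mem_rowStochastic hM, Pi.one_apply]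

theorem stmt1_general (N : ℕ)
    (P Λ : Matrix (Fin N) (Fin N) ℝ)
    (hPnn : ∀ i j, 0 ≤ P i j)
    (hProw : ∀ i, ∑ j, P i j = 1)
    (hΛdiag : Λ.IsDiag)
    (hΛ : ∀ i, Λ i i ∈ Set.Icc (0 : ℝ) 1)
    (hρ : specRad (Λ * P) < 1) :
    (∀ i j, 0 ≤ ((1 - Λ * P)⁻¹ * (1 - Λ)) i j) ∧
    ((1 - Λ * P)⁻¹ * (1 - Λ)) *ᵥ (fun _ => (1 : ℝ)) = (fun _ => (1 : ℝ)) ∧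
    (∀ x : Fin N → ℝ, (∀ i, x i ∈ Set.Icc (0 : ℝ) 1) →
      ∀ i, (((1 - Λ * P)⁻¹ * (1 - Λ)) *ᵥ x) i ∈ Set.Icc (0 : ℝ) 1) := by
  have hP : P *ᵥ 1 = 1 :=
    one_vecMul_of_mem_rowStochastic (mem_rowStochastic_iff_sum.2 ⟨hPnn, hProw⟩)
  have hW : (1 - Λ * P)⁻¹ * (1 - Λ) ∈ rowStochastic ℝ (Fin N) := by
    refine nonsing_inv_one_sub_mul_mem_rowStochastic (fun i j => ?_) (fun i j => ?_) ?_
      (tendsto_pow_atTop_nhds_zero_of_specRad_lt_one hρ)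
    · rw [← hΛdiag.diagonal_diag, diagonal_mul]
      exact mul_nonneg (hΛ i).1 (hPnn i j)
    · rw [Matrix.sub_apply]
      obtain rfl | hij := eq_or_ne i j
      · rw [one_apply_eq]
        exact sub_nonneg.2 (hΛ i).2
      · rw [one_apply_ne hij, hΛdiag hij, sub_zero]
    · rw [add_mulVec, ← mulVec_mulVec, hP, sub_mulVec, one_mulVec, add_sub_cancel]
  exact ⟨hW.1, hW.2, fun x hx => mulVec_mem_Icc_of_mem_rowStochastic hW hx⟩

/-- If `ρ(Λ P) < 1`, then `W = (I - Λ P)⁻¹ (I - Λ)` is entrywise nonnegative and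
row-stochastic (`W 𝟙 = 𝟙`); consequently `W` maps `[0,1]^N` into itself. -/
theorem stmt1 (N : ℕ) (hN : 1 ≤ N)
    (P Λ : Matrix (Fin N) (Fin N) ℝ)
    (hPnn : ∀ i j, 0 ≤ P i j)
    (hProw : ∀ i, ∑ j, P i j = 1)
    (hΛdiag : Λ.IsDiag)
    (hΛ : ∀ i, Λ i i ∈ Set.Icc (0 : ℝ) 1)
    (hρ : specRad (Λ * P) < 1) :
    (∀ i j, 0 ≤ ((1 - Λ * P)⁻¹ * (1 - Λ)) i j) ∧
    ((1 - Λ * P)⁻¹ * (1 - Λ)) *ᵥ (fun _ => (1 : ℝ)) = (fun _ => (1 : ℝ)) ∧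
    (∀ x : Fin N → ℝ, (∀ i, x i ∈ Set.Icc (0 : ℝ) 1) →
      ∀ i, (((1 - Λ * P)⁻¹ * (1 - Λ)) *ᵥ x) i ∈ Set.Icc (0 : ℝ) 1) :=
  stmt1_general N P Λ hPnn hProw hΛdiag hΛ hρ
end

section
/- (Control-free mean asymptotic opinions, Lemma 1.) Under Assumption 1, let u° ∈ [0,1]^N and let μ : ℕ → ℝ^N satisfy μ(0) ∈ [0,1]^N and μ(t+1) = ΛP μ(t) + (I − Λ) u° for all t ∈ ℕ. Then μ(t) converges as t → ∞ to μ_∞ = (I − ΛP)^{-1}(I − Λ) u°, and μ_∞ ∈ [0,1]^N. -/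
open Matrix Filter

/-- Lemma 1 (control-free mean asymptotic opinions): under Assumption 1, for
`u° ∈ [0,1]^N` and `μ(t+1) = Λ P μ(t) + (I - Λ) u°` with `μ(0) ∈ [0,1]^N`,
the means `μ(t)` converge to `μ_∞ = (I - Λ P)⁻¹ (I - Λ) u°`, and `μ_∞ ∈ [0,1]^N`. -/
theorem stmt4 (N : ℕ) (hN : 1 ≤ N)
    (P Λ : Matrix (Fin N) (Fin N) ℝ)
    (hPnn : ∀ i j, 0 ≤ P i j)
    (hProw : ∀ i, ∑ j, P i j = 1)
    (hΛdiag : Λ.IsDiag)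
    (hΛ : ∀ i, Λ i i ∈ Set.Icc (0 : ℝ) 1)
    (hconn : ∀ v : Fin N, ∃ (w : Fin N) (k : ℕ), Λ w w < 1 ∧ 0 < (P ^ k) v w)
    (u₀ : Fin N → ℝ) (hu₀ : ∀ v, u₀ v ∈ Set.Icc (0 : ℝ) 1)
    (μ : ℕ → Fin N → ℝ)
    (hμ0 : ∀ v, μ 0 v ∈ Set.Icc (0 : ℝ) 1)
    (hμ : ∀ t : ℕ, μ (t + 1) = (Λ * P) *ᵥ μ t + (1 - Λ) *ᵥ u₀) :
    (∀ i, Tendsto (fun t => μ t i) atTop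
      (nhds ((((1 - Λ * P)⁻¹ * (1 - Λ)) *ᵥ u₀) i))) ∧
    (∀ i, (((1 - Λ * P)⁻¹ * (1 - Λ)) *ᵥ u₀) i ∈ Set.Icc (0 : ℝ) 1) := by
  classical
  have hNpos : 0 < N := hN
  haveI : Nonempty (Fin N) := Fin.pos_iff_nonempty.mp hNpos
  have hne : (Finset.univ : Finset (Fin N)).Nonempty := Finset.univ_nonempty
  set A : Matrix (Fin N) (Fin N) ℝ := Λ * P with hAdef
  -- entries of A
  have hAentry : ∀ i j, A i j = Λ i i * P i j := by
    intro i j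
    rw [hAdef, Matrix.mul_apply]
    rw [Finset.sum_eq_single i]
    · intro b _ hb
      rw [hΛdiag (Ne.symm hb), zero_mul]
    · intro h; exact absurd (Finset.mem_univ i) h
  have hAnn : ∀ i j, 0 ≤ A i j := by
    intro i j
    rw [hAentry]
    exact mul_nonneg (hΛ i).1 (hPnn i j)
  have hArow : ∀ i, ∑ j, A i j = Λ i i := by
    intro i
    simp only [hAentry, ← Finset.mul_sum, hProw i, mul_one]
  -- nonnegativity of powers
  have hpow_nn : ∀ (M : Matrix (Fin N) (Fin N) ℝ), (∀ i j, 0 ≤ M i j) →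
      ∀ k i j, 0 ≤ (M ^ k) i j := by
    intro M hM k
    induction k with
    | zero =>
      intro i j
      simp only [pow_zero, Matrix.one_apply]
      split <;> norm_num
    | succ k ih =>
      intro i j
      rw [pow_succ, Matrix.mul_apply]
      exact Finset.sum_nonneg fun x _ => mul_nonneg (ih i x) (hM x j)
  have hApow_nn := hpow_nn A hAnn
  have hPpow_nn := hpow_nn P hPnn
  -- the norm
  set nrm : (Fin N → ℝ) → ℝ := fun x => Finset.univ.sup' hne (fun v => |x v|) with hnrmdef
  have habs : ∀ (x : Fin N → ℝ) v, |x v| ≤ nrm x := by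
    intro x v
    rw [hnrmdef]
    exact Finset.le_sup' (fun v => |x v|) (Finset.mem_univ v)
  have hnrm0 : ∀ x : Fin N → ℝ, 0 ≤ nrm x := fun x =>
    le_trans (abs_nonneg _) (habs x (Classical.arbitrary _))
  have hnrm_le : ∀ (x : Fin N → ℝ) (a : ℝ), (∀ v, |x v| ≤ a) → nrm x ≤ a := by
    intro x a h
    exact Finset.sup'_le _ _ fun v _ => h v
  -- bound for mulVec
  have hMbound : ∀ (M : Matrix (Fin N) (Fin N) ℝ), (∀ i j, 0 ≤ M i j) →
      ∀ (x : Fin N → ℝ) v, |(M *ᵥ x) v| ≤ (∑ w, M v w) * nrm x := by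
    intro M hM x v
    rw [Matrix.mulVec, dotProduct]
    calc |∑ w, M v w * x w| ≤ ∑ w, |M v w * x w| := Finset.abs_sum_le_sum_abs _ _
      _ ≤ ∑ w, M v w * nrm x := by
          apply Finset.sum_le_sum
          intro w _
          rw [abs_mul, abs_of_nonneg (hM v w)]
          exact mul_le_mul_of_nonneg_left (habs x w) (hM v w)
      _ = (∑ w, M v w) * nrm x := by rw [Finset.sum_mul]
  -- row sums of powers, as mulVec of ones
  have hones : ∀ (M : Matrix (Fin N) (Fin N) ℝ) v, (M *ᵥ (fun _ => (1:ℝ))) v = ∑ w, M v w := by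
    intro M v
    simp [Matrix.mulVec, dotProduct]
  -- monotone mulVec for nonneg matrices
  have hmono : ∀ (M : Matrix (Fin N) (Fin N) ℝ), (∀ i j, 0 ≤ M i j) →
      ∀ (x y : Fin N → ℝ), (∀ w, x w ≤ y w) → ∀ v, (M *ᵥ x) v ≤ (M *ᵥ y) v := by
    intro M hM x y hxy v
    simp only [Matrix.mulVec, dotProduct]
    exact Finset.sum_le_sum fun w _ => mul_le_mul_of_nonneg_left (hxy w) (hM v w)
  -- A^t *ᵥ 1 at most 1
  have hle1 : ∀ t v, ((A ^ t) *ᵥ (fun _ => (1:ℝ))) v ≤ 1 := by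
    intro t
    induction t with
    | zero => intro v; simp [Matrix.mulVec, dotProduct, Matrix.one_apply]
    | succ t ih =>
      intro v
      have h1 : (A ^ (t+1)) *ᵥ (fun _ => (1:ℝ)) = (A ^ t) *ᵥ (A *ᵥ (fun _ => (1:ℝ))) := by
        rw [Matrix.mulVec_mulVec, ← pow_succ]
      rw [h1]
      calc ((A ^ t) *ᵥ (A *ᵥ (fun _ => (1:ℝ)))) v
          ≤ ((A ^ t) *ᵥ (fun _ => (1:ℝ))) v := by
            apply hmono _ (hApow_nn t) _ _
            intro w
            rw [hones A w, hArow w]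
            exact (hΛ w).2
        _ ≤ 1 := ih v
  -- antitone in t
  have hanti : ∀ s t, s ≤ t → ∀ v, ((A ^ t) *ᵥ (fun _ => (1:ℝ))) v ≤ ((A ^ s) *ᵥ (fun _ => (1:ℝ))) v := by
    intro s t hst
    induction t, hst using Nat.le_induction with
    | base => intro v; exact le_rfl
    | succ t hst ih =>
      intro v
      have h1 : (A ^ (t+1)) *ᵥ (fun _ => (1:ℝ)) = (A ^ t) *ᵥ (A *ᵥ (fun _ => (1:ℝ))) := by
        rw [Matrix.mulVec_mulVec, ← pow_succ]
      rw [h1]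
      refine le_trans ?_ (ih v)
      apply hmono _ (hApow_nn t) _ _
      intro w
      rw [hones A w, hArow w]
      exact (hΛ w).2
  -- e vector
  set e : Fin N → ℝ := fun v => 1 - Λ v v with hedef
  have he0 : ∀ v, 0 ≤ e v := fun v => by simp [hedef]; exact (hΛ v).2
  have hAe_nn : ∀ j v, 0 ≤ ((A ^ j) *ᵥ e) v := by
    intro j v
    rw [Matrix.mulVec, dotProduct]
    exact Finset.sum_nonneg fun w _ => mul_nonneg (hApow_nn j v w) (he0 w)
  -- key positivity lemma
  have hkey : ∀ (k : ℕ) (v w : Fin N), Λ w w < 1 → 0 < (P ^ k) v w →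
      ∃ j, 0 < ((A ^ j) *ᵥ e) v := by
    intro k
    induction k with
    | zero =>
      intro v w hw hvw
      rw [pow_zero, Matrix.one_apply] at hvw
      by_cases hvw' : v = w
      · subst hvw'
        refine ⟨0, ?_⟩
        simp only [pow_zero, Matrix.one_mulVec]
        simpa [hedef] using hw
      · simp [hvw'] at hvw
    | succ k ih =>
      intro v w hw hvw
      rw [pow_succ', Matrix.mul_apply] at hvw
      obtain ⟨x, -, hx⟩ := Finset.exists_lt_of_sum_lt (by simpa using hvw :
        ∑ y, (0:ℝ) < ∑ y, P v y * (P ^ k) y w)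
      have hPvx : 0 < P v x := by
        rcases (hPnn v x).lt_or_eq with h | h
        · exact h
        · rw [← h, zero_mul] at hx; exact absurd hx (lt_irrefl 0)
      have hPkxw : 0 < (P ^ k) x w := by
        rcases (hPpow_nn k x w).lt_or_eq with h | h
        · exact h
        · rw [← h, mul_zero] at hx; exact absurd hx (lt_irrefl 0)
      rcases lt_or_ge (Λ v v) 1 with hv | hv
      · refine ⟨0, ?_⟩
        simp only [pow_zero, Matrix.one_mulVec]
        simpa [hedef] using hv
      · have hv1 : Λ v v = 1 := le_antisymm (hΛ v).2 hv
        obtain ⟨j, hj⟩ := ih x w hw hPkxw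
        refine ⟨j + 1, ?_⟩
        have h1 : (A ^ (j+1)) *ᵥ e = A *ᵥ ((A ^ j) *ᵥ e) := by
          rw [Matrix.mulVec_mulVec, ← pow_succ']
        rw [h1, Matrix.mulVec, dotProduct]
        have hterm : 0 < A v x * ((A ^ j) *ᵥ e) x := by
          apply mul_pos _ hj
          rw [hAentry, hv1, one_mul]
          exact hPvx
        refine lt_of_lt_of_le hterm ?_
        apply Finset.single_le_sum (f := fun y => A v y * ((A ^ j) *ᵥ e) y)
          (fun y _ => mul_nonneg (hAnn v y) (hAe_nn j y)) (Finset.mem_univ x)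
  -- choose exponents
  have h1 : ∀ v, ∃ j, 0 < ((A ^ j) *ᵥ e) v := by
    intro v
    obtain ⟨w, k, hw, hk⟩ := hconn v
    exact hkey k v w hw hk
  choose jj hjj using h1
  set m : ℕ := (Finset.univ.sup jj) + 1 with hmdef
  have hm0 : 0 < m := Nat.succ_pos _
  have hcm : ∀ v, ((A ^ m) *ᵥ (fun _ => (1:ℝ))) v < 1 := by
    intro v
    have hjm : jj v + 1 ≤ m := by
      have := Finset.le_sup (f := jj) (Finset.mem_univ v)
      omega
    refine lt_of_le_of_lt (hanti _ _ hjm v) ?_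
    have h1 : (A ^ (jj v + 1)) *ᵥ (fun _ => (1:ℝ))
        = (A ^ (jj v)) *ᵥ (fun _ => (1:ℝ)) - (A ^ (jj v)) *ᵥ e := by
      have he : (A *ᵥ (fun _ => (1:ℝ))) = (fun _ => (1:ℝ)) - e := by
        funext w
        simp only [Pi.sub_apply, hones A w, hArow w, hedef]
        ring
      rw [show (A ^ (jj v + 1)) *ᵥ (fun _ => (1:ℝ)) = (A ^ (jj v)) *ᵥ (A *ᵥ (fun _ => (1:ℝ))) by
        rw [Matrix.mulVec_mulVec, ← pow_succ], he, Matrix.mulVec_sub]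
    rw [h1, Pi.sub_apply]
    have := hjj v
    have := hle1 (jj v) v
    linarith
  -- contraction constant
  set c : ℝ := Finset.univ.sup' hne (fun v => ((A ^ m) *ᵥ (fun _ => (1:ℝ))) v) with hcdef
  have hc1 : c < 1 := by
    rw [hcdef, Finset.sup'_lt_iff]
    intro v _
    exact hcm v
  have hc0 : 0 ≤ c := by
    refine le_trans ?_ (Finset.le_sup' _ (Finset.mem_univ (Classical.arbitrary (Fin N))))
    rw [Matrix.mulVec, dotProduct]
    exact Finset.sum_nonneg fun w _ => mul_nonneg (hApow_nn m _ w) zero_le_one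
  have hrowc : ∀ v, ∑ w, (A ^ m) v w ≤ c := by
    intro v
    rw [← hones (A ^ m) v]
    exact Finset.le_sup' _ (Finset.mem_univ v)
  -- contraction and nonexpansiveness in nrm
  have hcontr : ∀ x : Fin N → ℝ, nrm ((A ^ m) *ᵥ x) ≤ c * nrm x := by
    intro x
    apply hnrm_le
    intro v
    refine le_trans (hMbound _ (hApow_nn m) x v) ?_
    exact mul_le_mul_of_nonneg_right (hrowc v) (hnrm0 x)
  have hnonexp : ∀ (r : ℕ) (x : Fin N → ℝ), nrm ((A ^ r) *ᵥ x) ≤ nrm x := by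
    intro r
    induction r with
    | zero => intro x; simp [Matrix.one_mulVec]
    | succ r ih =>
      intro x
      have h1 : (A ^ (r+1)) *ᵥ x = (A ^ r) *ᵥ (A *ᵥ x) := by
        rw [Matrix.mulVec_mulVec, ← pow_succ]
      rw [h1]
      refine le_trans (ih _) ?_
      apply hnrm_le
      intro v
      refine le_trans (hMbound A hAnn x v) ?_
      rw [hArow v]
      calc Λ v v * nrm x ≤ 1 * nrm x :=
            mul_le_mul_of_nonneg_right (hΛ v).2 (hnrm0 x)
        _ = nrm x := one_mul _
  have hq : ∀ (q : ℕ) (x : Fin N → ℝ), nrm ((A ^ (m * q)) *ᵥ x) ≤ c ^ q * nrm x := by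
    intro q
    induction q with
    | zero => intro x; simp [Matrix.one_mulVec]
    | succ q ih =>
      intro x
      have h1 : (A ^ (m * (q+1))) *ᵥ x = (A ^ (m * q)) *ᵥ ((A ^ m) *ᵥ x) := by
        rw [Matrix.mulVec_mulVec, ← pow_add, Nat.mul_succ]
      rw [h1]
      calc nrm ((A ^ (m * q)) *ᵥ ((A ^ m) *ᵥ x)) ≤ c ^ q * nrm ((A ^ m) *ᵥ x) := ih _
        _ ≤ c ^ q * (c * nrm x) :=
            mul_le_mul_of_nonneg_left (hcontr x) (pow_nonneg hc0 q)
        _ = c ^ (q+1) * nrm x := by ring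
  -- invertibility
  have hApow_fix : ∀ (x : Fin N → ℝ), (1 - A) *ᵥ x = 0 → ∀ t, x = (A ^ t) *ᵥ x := by
    intro x hx t
    have hxA : x = A *ᵥ x := by
      rw [Matrix.sub_mulVec, Matrix.one_mulVec, sub_eq_zero] at hx
      exact hx
    induction t with
    | zero => simp [Matrix.one_mulVec]
    | succ t ih =>
      rw [show (A ^ (t+1)) *ᵥ x = (A ^ t) *ᵥ (A *ᵥ x) by rw [Matrix.mulVec_mulVec, ← pow_succ],
        ← hxA]
      exact ih
  have hdet : IsUnit (1 - A).det := by
    rw [isUnit_iff_ne_zero]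
    intro hd
    obtain ⟨x, hx0, hx⟩ := (Matrix.exists_mulVec_eq_zero_iff).mpr hd
    have hxm := hApow_fix x hx m
    have h2 : nrm x ≤ c * nrm x := by
      calc nrm x = nrm ((A ^ m) *ᵥ x) := by rw [← hxm]
        _ ≤ c * nrm x := hcontr x
    have hnx : 0 < nrm x := by
      obtain ⟨v, hv⟩ := Function.ne_iff.mp hx0
      exact lt_of_lt_of_le (abs_pos.mpr hv) (habs x v)
    nlinarith
  -- the limit
  set muL : Fin N → ℝ := ((1 - A)⁻¹ * (1 - Λ)) *ᵥ u₀ with hmuLdef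
  set b : Fin N → ℝ := (1 - Λ) *ᵥ u₀ with hbdef
  have hmuLb : muL = (1 - A)⁻¹ *ᵥ b := by
    rw [hmuLdef, hbdef, Matrix.mulVec_mulVec]
  have hfix : A *ᵥ muL + b = muL := by
    have h1 : (1 - A) *ᵥ muL = b := by
      rw [hmuLb, Matrix.mulVec_mulVec, Matrix.mul_nonsing_inv _ hdet, Matrix.one_mulVec]
    rw [Matrix.sub_mulVec, Matrix.one_mulVec] at h1
    rw [← h1]; abel
  -- the error sequence
  have hδ : ∀ t, μ t - muL = (A ^ t) *ᵥ (μ 0 - muL) := by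
    intro t
    induction t with
    | zero => simp [Matrix.one_mulVec]
    | succ t ih =>
      have h2 : μ (t+1) - muL = A *ᵥ (μ t - muL) := by
        calc μ (t+1) - muL = (A *ᵥ μ t + b) - (A *ᵥ muL + b) := by rw [hμ t, hfix]
          _ = A *ᵥ μ t - A *ᵥ muL := by abel
          _ = A *ᵥ (μ t - muL) := (Matrix.mulVec_sub A _ _).symm
      rw [h2, ih, Matrix.mulVec_mulVec, ← pow_succ']
  -- the bound
  set C : ℝ := nrm (μ 0 - muL) with hCdef
  have hC0 : 0 ≤ C := hnrm0 _
  have hbd : ∀ t, nrm (μ t - muL) ≤ c ^ (t / m) * C := by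
    intro t
    rw [hδ t]
    have ht : m * (t / m) + t % m = t := Nat.div_add_mod t m
    have h1 : (A ^ t) *ᵥ (μ 0 - muL)
        = (A ^ (m * (t / m))) *ᵥ ((A ^ (t % m)) *ᵥ (μ 0 - muL)) := by
      rw [Matrix.mulVec_mulVec, ← pow_add, ht]
    rw [h1]
    calc nrm ((A ^ (m * (t / m))) *ᵥ ((A ^ (t % m)) *ᵥ (μ 0 - muL)))
        ≤ c ^ (t / m) * nrm ((A ^ (t % m)) *ᵥ (μ 0 - muL)) := hq _ _
      _ ≤ c ^ (t / m) * C :=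
          mul_le_mul_of_nonneg_left (hnonexp _ _) (pow_nonneg hc0 _)
  -- the tendsto of the bound
  have hdiv : Tendsto (fun t : ℕ => t / m) atTop atTop := by
    apply tendsto_atTop_atTop.2
    intro bb
    exact ⟨bb * m, fun t ht => (Nat.le_div_iff_mul_le hm0).2 ht⟩
  have hCt : Tendsto (fun t : ℕ => c ^ (t / m) * C) atTop (nhds 0) := by
    have := ((tendsto_pow_atTop_nhds_zero_of_lt_one hc0 hc1).comp hdiv).mul_const C
    simpa using this
  -- part 1
  have hpart1 : ∀ i, Tendsto (fun t => μ t i) atTop (nhds (muL i)) := by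
    intro i
    have hd : Tendsto (fun t => μ t i - muL i) atTop (nhds 0) := by
      rw [tendsto_zero_iff_abs_tendsto_zero]
      apply squeeze_zero (fun t => abs_nonneg _) _ hCt
      intro t
      calc |μ t i - muL i| = |(μ t - muL) i| := rfl
        _ ≤ nrm (μ t - muL) := habs _ i
        _ ≤ c ^ (t / m) * C := hbd t
    have := hd.add_const (muL i)
    simpa using this
  -- invariance
  have hin : ∀ t v, μ t v ∈ Set.Icc (0:ℝ) 1 := by
    intro t
    induction t with
    | zero => exact hμ0
    | succ t ih =>
      intro v
      have hb : b v = (1 - Λ v v) * u₀ v := by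
        rw [hbdef, Matrix.sub_mulVec, Matrix.one_mulVec, Pi.sub_apply]
        have : (Λ *ᵥ u₀) v = Λ v v * u₀ v := by
          rw [Matrix.mulVec, dotProduct]
          rw [Finset.sum_eq_single v]
          · intro bb _ hbb; rw [hΛdiag (Ne.symm hbb), zero_mul]
          · intro h; exact absurd (Finset.mem_univ v) h
        rw [this]; ring
      have hμv : μ (t+1) v = (∑ w, A v w * μ t w) + (1 - Λ v v) * u₀ v := by
        rw [hμ t, Pi.add_apply, hb]
        rfl
      constructor
      · rw [hμv]
        have h1 : 0 ≤ ∑ w, A v w * μ t w :=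
          Finset.sum_nonneg fun w _ => mul_nonneg (hAnn v w) (ih w).1
        have h2 : 0 ≤ (1 - Λ v v) * u₀ v :=
          mul_nonneg (by linarith [(hΛ v).2]) (hu₀ v).1
        linarith
      · rw [hμv]
        have h1 : ∑ w, A v w * μ t w ≤ Λ v v := by
          calc ∑ w, A v w * μ t w ≤ ∑ w, A v w * 1 :=
                Finset.sum_le_sum fun w _ => mul_le_mul_of_nonneg_left (ih w).2 (hAnn v w)
            _ = Λ v v := by simp [hArow v]
        have h2 : (1 - Λ v v) * u₀ v ≤ 1 - Λ v v := by
          have := (hΛ v).2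
          nlinarith [(hu₀ v).2, (hΛ v).2]
        linarith
  refine ⟨hpart1, fun i => ⟨?_, ?_⟩⟩
  · exact ge_of_tendsto (hpart1 i) (Filter.Eventually.of_forall fun t => (hin t i).1)
  · exact le_of_tendsto (hpart1 i) (Filter.Eventually.of_forall fun t => (hin t i).2)
end

section
/- (Asymptotic opinions under static policies, Proposition 1.) Under Assumption 1, let u° ∈ [0,1]^N, let T ∈ ℕ, let ν, ν^r ∈ ℝ^N, and define the controlled input u^c(t) = ν for t < T, u^c(T) = ν^r, and u^c(t) = 0 for t > T. Let the cumulative input satisfy u(0) = u° and u(t+1) = u(t) + u^c(t), and let μ : ℕ → ℝ^N satisfy μ(0) ∈ [0,1]^N and μ(t+1) = ΛP μ(t) + (I − Λ) u(t). Set ū = u° + T·ν + ν^r and assume ū ∈ [0,1]^N. Then u(t) = ū for all t > T, and μ(t) converges as t → ∞ to μ_∞ = (I − ΛP)^{-1}(I − Λ) ū, with μ_∞ ∈ [0,1]^N. -/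
open Matrix Filter

lemma auxA_norm_mulVec {N : ℕ} (B : Matrix (Fin N) (Fin N) ℝ)
    (hB : ∀ i j, 0 ≤ B i j) {c : ℝ} (hc : 0 ≤ c) (hrow : ∀ i, ∑ j, B i j ≤ c)
    (x : Fin N → ℝ) : ‖B *ᵥ x‖ ≤ c * ‖x‖ := by
  have h0 : 0 ≤ c * ‖x‖ := by positivity
  rw [pi_norm_le_iff_of_nonneg h0]
  intro i
  have h1 : (B *ᵥ x) i = ∑ j, B i j * x j := rfl
  rw [h1, Real.norm_eq_abs]
  calc |∑ j, B i j * x j| ≤ ∑ j, |B i j * x j| := Finset.abs_sum_le_sum_abs _ _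
    _ = ∑ j, B i j * |x j| := by
        refine Finset.sum_congr rfl fun j _ => ?_
        rw [abs_mul, abs_of_nonneg (hB i j)]
    _ ≤ ∑ j, B i j * ‖x‖ := Finset.sum_le_sum fun j _ =>
        mul_le_mul_of_nonneg_left (by simpa using norm_le_pi_norm x j) (hB i j)
    _ = (∑ j, B i j) * ‖x‖ := by rw [Finset.sum_mul]
    _ ≤ c * ‖x‖ := mul_le_mul_of_nonneg_right (hrow i) (norm_nonneg x)

lemma auxA_decay {N : ℕ} (A : Matrix (Fin N) (Fin N) ℝ) (M : ℕ) (hM : 1 ≤ M)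
    {c : ℝ} (hc0 : 0 ≤ c) (hc1 : c < 1)
    (hcontr : ∀ x : Fin N → ℝ, ‖(A ^ M) *ᵥ x‖ ≤ c * ‖x‖)
    (hone : ∀ (p : ℕ) (x : Fin N → ℝ), ‖(A ^ p) *ᵥ x‖ ≤ ‖x‖)
    (e : ℕ → Fin N → ℝ) (he : ∀ n, e (n + 1) = A *ᵥ e n) :
    ∀ i, Tendsto (fun n => e n i) atTop (nhds 0) := by
  have hstep : ∀ m p, e (m + p) = (A ^ p) *ᵥ e m := by
    intro m p
    induction p with
    | zero => simp
    | succ p ih =>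
        rw [show m + (p + 1) = (m + p) + 1 from rfl, he, ih, mulVec_mulVec,
          ← pow_succ']
  have hmono : ∀ m p, ‖e (m + p)‖ ≤ ‖e m‖ := by
    intro m p; rw [hstep]; exact hone p _
  have hq : ∀ m q, ‖e (m + M * q)‖ ≤ c ^ q * ‖e m‖ := by
    intro m q
    induction q with
    | zero => simp
    | succ q ih =>
        have h1 : m + M * (q + 1) = (m + M * q) + M := by ring
        rw [h1, hstep]
        calc ‖(A ^ M) *ᵥ e (m + M * q)‖ ≤ c * ‖e (m + M * q)‖ := hcontr _
          _ ≤ c * (c ^ q * ‖e m‖) := mul_le_mul_of_nonneg_left ih hc0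
          _ = c ^ (q + 1) * ‖e m‖ := by ring
  have hbound : ∀ n, ‖e n‖ ≤ c ^ (n / M) * ‖e 0‖ := by
    intro n
    have h1 : n = n % M + M * (n / M) := (Nat.mod_add_div n M).symm
    calc ‖e n‖ = ‖e (n % M + M * (n / M))‖ := by rw [← h1]
      _ ≤ c ^ (n / M) * ‖e (n % M)‖ := hq _ _
      _ ≤ c ^ (n / M) * ‖e 0‖ := by
          refine mul_le_mul_of_nonneg_left ?_ (pow_nonneg hc0 _)
          simpa using hmono 0 (n % M)
  have hdiv : Tendsto (fun n : ℕ => n / M) atTop atTop := by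
    refine tendsto_atTop_atTop.mpr fun b => ⟨b * M, fun n hn => ?_⟩
    exact (Nat.le_div_iff_mul_le (by omega)).mpr hn
  have hg : Tendsto (fun n : ℕ => c ^ (n / M) * ‖e 0‖) atTop (nhds 0) := by
    have := ((tendsto_pow_atTop_nhds_zero_of_lt_one hc0 hc1).comp hdiv).mul_const ‖e 0‖
    simpa using this
  intro i
  refine squeeze_zero_norm (fun n => ?_) hg
  calc ‖e n i‖ ≤ ‖e n‖ := norm_le_pi_norm (e n) i
    _ ≤ c ^ (n / M) * ‖e 0‖ := hbound n

/-- Proposition 1 (asymptotic opinions under static policies): under Assumption 1,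
with controlled input `u^c(t) = ν` for `t < T`, `u^c(T) = ν^r`, `u^c(t) = 0` for
`t > T`, cumulative input `u(0) = u°`, `u(t+1) = u(t) + u^c(t)`, and mean dynamics
`μ(t+1) = Λ P μ(t) + (I - Λ) u(t)` with `μ(0) ∈ [0,1]^N`, setting
`ū = u° + T ν + ν^r ∈ [0,1]^N`, we have `u(t) = ū` for all `t > T` and `μ(t)`
converges to `μ_∞ = (I - Λ P)⁻¹ (I - Λ) ū ∈ [0,1]^N`. -/
theorem stmt6 (N : ℕ) (hN : 1 ≤ N)
    (P Λ : Matrix (Fin N) (Fin N) ℝ)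
    (hPnn : ∀ i j, 0 ≤ P i j)
    (hProw : ∀ i, ∑ j, P i j = 1)
    (hΛdiag : Λ.IsDiag)
    (hΛ : ∀ i, Λ i i ∈ Set.Icc (0 : ℝ) 1)
    (hconn : ∀ v : Fin N, ∃ (w : Fin N) (k : ℕ), Λ w w < 1 ∧ 0 < (P ^ k) v w)
    (u₀ : Fin N → ℝ) (hu₀ : ∀ v, u₀ v ∈ Set.Icc (0 : ℝ) 1)
    (T : ℕ) (ν νr : Fin N → ℝ)
    (uc : ℕ → Fin N → ℝ)
    (huc : ∀ t : ℕ, uc t = if t < T then ν else if t = T then νr else 0)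
    (u : ℕ → Fin N → ℝ)
    (hu0 : u 0 = u₀)
    (hu : ∀ t : ℕ, u (t + 1) = u t + uc t)
    (μ : ℕ → Fin N → ℝ)
    (hμ0 : ∀ v, μ 0 v ∈ Set.Icc (0 : ℝ) 1)
    (hμ : ∀ t : ℕ, μ (t + 1) = (Λ * P) *ᵥ μ t + (1 - Λ) *ᵥ u t)
    (ubar : Fin N → ℝ)
    (hubar : ubar = u₀ + (T : ℝ) • ν + νr)
    (hubar01 : ∀ v, ubar v ∈ Set.Icc (0 : ℝ) 1) :
    (∀ t : ℕ, T < t → u t = ubar) ∧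
    (∀ i, Tendsto (fun t => μ t i) atTop
      (nhds ((((1 - Λ * P)⁻¹ * (1 - Λ)) *ᵥ ubar) i))) ∧
    (∀ i, (((1 - Λ * P)⁻¹ * (1 - Λ)) *ᵥ ubar) i ∈ Set.Icc (0 : ℝ) 1) := by
  haveI : Nonempty (Fin N) := Fin.pos_iff_nonempty.mp hN
  set A := Λ * P with hAdef
  have hΛnn : ∀ v, (0:ℝ) ≤ Λ v v := fun v => (hΛ v).1
  have hΛle : ∀ v, Λ v v ≤ 1 := fun v => (hΛ v).2
  have hAentry : ∀ i j, A i j = Λ i i * P i j := by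
    intro i j
    rw [hAdef, Matrix.mul_apply]
    rw [Finset.sum_eq_single i]
    · intro b _ hb
      rw [hΛdiag (Ne.symm hb), zero_mul]
    · intro h; exact absurd (Finset.mem_univ i) h
  have hAnn : ∀ i j, 0 ≤ A i j := fun i j => by
    rw [hAentry]; exact mul_nonneg (hΛnn i) (hPnn i j)
  have hArow : ∀ i, ∑ j, A i j = Λ i i := by
    intro i
    simp only [hAentry]
    rw [← Finset.mul_sum, hProw, mul_one]
  -- powers of nonneg matrices are nonneg
  have hpow_nn : ∀ (B : Matrix (Fin N) (Fin N) ℝ), (∀ i j, 0 ≤ B i j) →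
      ∀ m i j, 0 ≤ (B ^ m) i j := by
    intro B hB m
    induction m with
    | zero =>
        intro i j
        rw [pow_zero]
        by_cases h : i = j <;> simp [Matrix.one_apply, h]
    | succ m ih =>
        intro i j
        rw [pow_succ, Matrix.mul_apply]
        exact Finset.sum_nonneg fun l _ => mul_nonneg (ih i l) (hB l j)
  have hPpow_row : ∀ k i, ∑ j, (P ^ k) i j = 1 := by
    intro k
    induction k with
    | zero => intro i; simp [Matrix.one_apply]
    | succ k ih =>
        intro i
        rw [pow_succ]
        simp only [Matrix.mul_apply]
        rw [Finset.sum_comm]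
        calc ∑ l, ∑ j, (P ^ k) i l * P l j
            = ∑ l, (P ^ k) i l * ∑ j, P l j := by
              refine Finset.sum_congr rfl fun l _ => ?_
              rw [Finset.mul_sum]
          _ = 1 := by simp only [hProw, mul_one]; exact ih i
  have hApow_le : ∀ k i j, (A ^ k) i j ≤ (P ^ k) i j := by
    intro k
    induction k with
    | zero => intro i j; rw [pow_zero, pow_zero]
    | succ k ih =>
        intro i j
        rw [pow_succ, pow_succ, Matrix.mul_apply, Matrix.mul_apply]
        refine Finset.sum_le_sum fun l _ => ?_
        have h1 : A l j ≤ P l j := by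
          rw [hAentry]
          calc Λ l l * P l j ≤ 1 * P l j :=
                mul_le_mul_of_nonneg_right (hΛle l) (hPnn l j)
            _ = P l j := one_mul _
        exact mul_le_mul (ih i l) h1 (hAnn l j) (hpow_nn P hPnn k i l)
  -- row sums of powers of A
  have hr_le1 : ∀ m i, ∑ j, (A ^ m) i j ≤ 1 := by
    intro m
    induction m with
    | zero => intro i; simp [Matrix.one_apply]
    | succ m ih =>
        intro i
        rw [pow_succ']
        simp only [Matrix.mul_apply]
        rw [Finset.sum_comm]
        calc ∑ l, ∑ j, A i l * (A ^ m) l j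
            = ∑ l, A i l * ∑ j, (A ^ m) l j := by
              refine Finset.sum_congr rfl fun l _ => ?_
              rw [Finset.mul_sum]
          _ ≤ ∑ l, A i l * 1 :=
              Finset.sum_le_sum fun l _ =>
                mul_le_mul_of_nonneg_left (ih l) (hAnn i l)
          _ = Λ i i := by simp only [mul_one]; exact hArow i
          _ ≤ 1 := hΛle i
  have hr_nn : ∀ m i, 0 ≤ ∑ j, (A ^ m) i j := fun m i =>
    Finset.sum_nonneg fun j _ => hpow_nn A hAnn m i j
  have hr_mono : ∀ p m i, ∑ j, (A ^ (p + m)) i j ≤ ∑ j, (A ^ p) i j := by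
    intro p m i
    rw [pow_add]
    simp only [Matrix.mul_apply]
    rw [Finset.sum_comm]
    calc ∑ l, ∑ j, (A ^ p) i l * (A ^ m) l j
        = ∑ l, (A ^ p) i l * ∑ j, (A ^ m) l j := by
          refine Finset.sum_congr rfl fun l _ => ?_
          rw [Finset.mul_sum]
      _ ≤ ∑ l, (A ^ p) i l * 1 :=
          Finset.sum_le_sum fun l _ =>
            mul_le_mul_of_nonneg_left (hr_le1 m l) (hpow_nn A hAnn p i l)
      _ = ∑ l, (A ^ p) i l := by simp only [mul_one]
  -- strict drop of row sums
  have hdrop : ∀ v, ∃ k, ∑ j, (A ^ (k + 1)) v j < 1 := by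
    intro v
    obtain ⟨w, k, hw1, hPk⟩ := hconn v
    refine ⟨k, ?_⟩
    have h1 : ∑ j, (A ^ (k + 1)) v j ≤ ∑ l, (P ^ k) v l * Λ l l := by
      rw [pow_succ]
      simp only [Matrix.mul_apply]
      rw [Finset.sum_comm]
      calc ∑ l, ∑ j, (A ^ k) v l * A l j
          = ∑ l, (A ^ k) v l * Λ l l := by
            refine Finset.sum_congr rfl fun l _ => ?_
            rw [← Finset.mul_sum, hArow]
        _ ≤ ∑ l, (P ^ k) v l * Λ l l :=
            Finset.sum_le_sum fun l _ =>
              mul_le_mul_of_nonneg_right (hApow_le k v l) (hΛnn l)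
    have h2 : (P ^ k) v w * (1 - Λ w w) ≤ ∑ l, (P ^ k) v l * (1 - Λ l l) := by
      refine Finset.single_le_sum (f := fun l => (P ^ k) v l * (1 - Λ l l))
        (fun l _ => mul_nonneg (hpow_nn P hPnn k v l) (by linarith [hΛle l]))
        (Finset.mem_univ w)
    have h3 : ∑ l, ((P ^ k) v l * Λ l l + (P ^ k) v l * (1 - Λ l l)) = 1 := by
      calc ∑ l, ((P ^ k) v l * Λ l l + (P ^ k) v l * (1 - Λ l l))
          = ∑ l, (P ^ k) v l := Finset.sum_congr rfl fun l _ => by ring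
        _ = 1 := hPpow_row k v
    rw [Finset.sum_add_distrib] at h3
    have h4 : 0 < (P ^ k) v w * (1 - Λ w w) :=
      mul_pos hPk (by linarith)
    linarith
  choose kf hkf using hdrop
  set M : ℕ := (Finset.univ.sup kf) + 1 with hMdef
  have hM1 : 1 ≤ M := Nat.le_add_left 1 _
  have hrM : ∀ v, ∑ j, (A ^ M) v j < 1 := by
    intro v
    have hle : kf v + 1 ≤ M := by
      have := Finset.le_sup (f := kf) (Finset.mem_univ v)
      omega
    have := hr_mono (kf v + 1) (M - (kf v + 1)) v
    rw [show kf v + 1 + (M - (kf v + 1)) = M from by omega] at this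
    exact lt_of_le_of_lt this (hkf v)
  set c : ℝ := Finset.univ.sup' Finset.univ_nonempty (fun v => ∑ j, (A ^ M) v j)
    with hcdef
  have hc1 : c < 1 := by
    rw [hcdef, Finset.sup'_lt_iff]
    exact fun v _ => hrM v
  have hrowc : ∀ v, ∑ j, (A ^ M) v j ≤ c := fun v =>
    Finset.le_sup' (f := fun v => ∑ j, (A ^ M) v j) (Finset.mem_univ v)
  have hc0 : 0 ≤ c :=
    le_trans (hr_nn M (Classical.arbitrary _)) (hrowc _)
  have hcontr : ∀ x : Fin N → ℝ, ‖(A ^ M) *ᵥ x‖ ≤ c * ‖x‖ :=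
    auxA_norm_mulVec _ (hpow_nn A hAnn M) hc0 hrowc
  have hone : ∀ (p : ℕ) (x : Fin N → ℝ), ‖(A ^ p) *ᵥ x‖ ≤ ‖x‖ := fun p x => by
    simpa using auxA_norm_mulVec _ (hpow_nn A hAnn p) zero_le_one (hr_le1 p) x
  -- invertibility
  have hdet : (1 - A).det ≠ 0 := by
    intro h
    obtain ⟨x, hx0, hx⟩ := (Matrix.exists_mulVec_eq_zero_iff).mpr h
    have hfix : A *ᵥ x = x := by
      rw [sub_mulVec, one_mulVec, sub_eq_zero] at hx
      exact hx.symm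
    have hfixp : ∀ m, (A ^ m) *ᵥ x = x := by
      intro m
      induction m with
      | zero => simp
      | succ m ih => rw [pow_succ', ← mulVec_mulVec, ih, hfix]
    have h1 := hcontr x
    rw [hfixp M] at h1
    have hxpos : 0 < ‖x‖ := norm_pos_iff.mpr hx0
    nlinarith
  have hunit : IsUnit (1 - A).det := isUnit_iff_ne_zero.mpr hdet
  set μinf : Fin N → ℝ := ((1 - A)⁻¹ * (1 - Λ)) *ᵥ ubar with hμinfdef
  have hfixμ : μinf = A *ᵥ μinf + (1 - Λ) *ᵥ ubar := by
    have h1 : (1 - A) *ᵥ μinf = (1 - Λ) *ᵥ ubar := by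
      rw [hμinfdef, mulVec_mulVec, ← Matrix.mul_assoc, Matrix.mul_nonsing_inv _ hunit,
        Matrix.one_mul]
    rw [sub_mulVec, one_mulVec] at h1
    exact sub_eq_iff_eq_add'.mp h1
  -- cumulative input facts
  have hut : ∀ t, t ≤ T → u t = u₀ + (t : ℝ) • ν := by
    intro t
    induction t with
    | zero => intro _; simp [hu0]
    | succ t ih =>
        intro hle
        have hlt : t < T := by omega
        rw [hu t, huc t, if_pos hlt, ih (le_of_lt hlt)]
        push_cast
        rw [add_smul, one_smul, ← add_assoc]
  have huT1 : u (T + 1) = ubar := by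
    rw [hu T, huc T, if_neg (lt_irrefl T), if_pos rfl, hut T le_rfl, hubar]
  have hshift : ∀ n, u (T + 1 + n) = ubar := by
    intro n
    induction n with
    | zero => simpa using huT1
    | succ n ih =>
        rw [show T + 1 + (n + 1) = (T + 1 + n) + 1 from rfl, hu, huc,
          if_neg (by omega), if_neg (by omega), add_zero, ih]
  have hufix : ∀ t : ℕ, T < t → u t = ubar := by
    intro t ht
    have := hshift (t - T - 1)
    rwa [show T + 1 + (t - T - 1) = t from by omega] at this
  refine ⟨hufix, ?_, ?_⟩
  · -- convergence of μ
    have herec : ∀ n, (fun n => μ (n + (T + 1)) - μinf) (n + 1)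
        = A *ᵥ (fun n => μ (n + (T + 1)) - μinf) n := by
      intro n
      simp only
      have hun : u (n + (T + 1)) = ubar := hufix _ (by omega)
      rw [show n + 1 + (T + 1) = (n + (T + 1)) + 1 from by ring, hμ, hun]
      calc A *ᵥ μ (n + (T + 1)) + (1 - Λ) *ᵥ ubar - μinf
          = A *ᵥ μ (n + (T + 1)) + (1 - Λ) *ᵥ ubar
            - (A *ᵥ μinf + (1 - Λ) *ᵥ ubar) := by rw [← hfixμ]
        _ = A *ᵥ μ (n + (T + 1)) - A *ᵥ μinf := by abel
        _ = A *ᵥ (μ (n + (T + 1)) - μinf) := (mulVec_sub A _ _).symm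
    have htend0 := auxA_decay A M hM1 hc0 hc1 hcontr hone (fun n => μ (n + (T + 1)) - μinf) herec
    intro i
    have h1 : Tendsto (fun n => μ (n + (T + 1)) i) atTop (nhds (μinf i)) := by
      have := (htend0 i).add_const (μinf i)
      simp only [Pi.sub_apply, sub_add_cancel, zero_add] at this
      exact this
    exact (tendsto_add_atTop_iff_nat (T + 1)).mp h1
  · -- μinf ∈ [0,1]
    have hAv : ∀ (x : Fin N → ℝ) v, (A *ᵥ x) v = Λ v v * ∑ j, P v j * x j := by
      intro x v
      show ∑ j, A v j * x j = _
      rw [Finset.mul_sum]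
      exact Finset.sum_congr rfl fun j _ => by rw [hAentry, mul_assoc]
    have hIv : ∀ (x : Fin N → ℝ) v, ((1 - Λ) *ᵥ x) v = (1 - Λ v v) * x v := by
      intro x v
      show ∑ j, (1 - Λ) v j * x j = _
      rw [Finset.sum_eq_single v]
      · rw [Matrix.sub_apply, Matrix.one_apply_eq]
      · intro b _ hb
        rw [Matrix.sub_apply, Matrix.one_apply_ne (Ne.symm hb), hΛdiag (Ne.symm hb),
          sub_zero, zero_mul]
      · intro h; exact absurd (Finset.mem_univ v) h
    set f : (Fin N → ℝ) → (Fin N → ℝ) := fun x => A *ᵥ x + (1 - Λ) *ᵥ ubar with hfdef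
    have hw01 : ∀ n v, (f^[n] ubar) v ∈ Set.Icc (0:ℝ) 1 := by
      intro n
      induction n with
      | zero => simpa using hubar01
      | succ n ih =>
          intro v
          rw [Function.iterate_succ_apply']
          have hS0 : 0 ≤ ∑ j, P v j * (f^[n] ubar) j :=
            Finset.sum_nonneg fun j _ => mul_nonneg (hPnn v j) (ih j).1
          have hS1 : ∑ j, P v j * (f^[n] ubar) j ≤ 1 := by
            calc ∑ j, P v j * (f^[n] ubar) j ≤ ∑ j, P v j * 1 :=
                  Finset.sum_le_sum fun j _ =>
                    mul_le_mul_of_nonneg_left (ih j).2 (hPnn v j)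
              _ = 1 := by simp only [mul_one]; exact hProw v
          have hval : f (f^[n] ubar) v
              = Λ v v * (∑ j, P v j * (f^[n] ubar) j) + (1 - Λ v v) * ubar v := by
            rw [hfdef]
            simp only [Pi.add_apply]
            rw [hAv, hIv]
          rw [hval]
          constructor
          · have := (hubar01 v).1
            have := hΛnn v
            have := hΛle v
            nlinarith
          · have := (hubar01 v).2
            have := hΛnn v
            have := hΛle v
            nlinarith
    have herec : ∀ n, (fun n => f^[n] ubar - μinf) (n + 1)
        = A *ᵥ (fun n => f^[n] ubar - μinf) n := by
      intro n
      simp only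
      rw [Function.iterate_succ_apply']
      calc f (f^[n] ubar) - μinf
          = A *ᵥ (f^[n] ubar) + (1 - Λ) *ᵥ ubar
            - (A *ᵥ μinf + (1 - Λ) *ᵥ ubar) := by rw [← hfixμ]
        _ = A *ᵥ (f^[n] ubar) - A *ᵥ μinf := by abel
        _ = A *ᵥ (f^[n] ubar - μinf) := (mulVec_sub A _ _).symm
    have htend0 := auxA_decay A M hM1 hc0 hc1 hcontr hone (fun n => f^[n] ubar - μinf) herec
    intro i
    have h1 : Tendsto (fun n => (f^[n] ubar) i) atTop (nhds (μinf i)) := by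
      have := (htend0 i).add_const (μinf i)
      simp only [Pi.sub_apply, sub_add_cancel, zero_add] at this
      exact this
    exact ⟨ge_of_tendsto' h1 fun n => (hw01 n i).1, le_of_tendsto' h1 fun n => (hw01 n i).2⟩
end

section
/- (Asymptotic opinions of the short-term-shift model under static policies, Proposition 2.) Under Assumption 1, let u° ∈ [0,1]^N and let u^c : ℕ → ℝ^N be a controlled input that is eventually zero, i.e., there exists T ∈ ℕ with u^c(t) = 0 for all t > T. Let μ^st : ℕ → ℝ^N satisfy μ^st(0) ∈ [0,1]^N and μ^st(t+1) = ΛP μ^st(t) + (I − Λ)(u° + u^c(t)) for all t ∈ ℕ. Then μ^st(t) converges as t → ∞ to (I − ΛP)^{-1}(I − Λ) u°, which lies in [0,1]^N and is independent of the values of u^c before time T. -/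
open Matrix Filter

/-- Contraction convergence: if `A` does not increase sup-norm and `A ^ m` is a
`c`-contraction with `c < 1`, then any sequence iterating `A` tends to zero. -/
lemma stmt7_contr {N : ℕ} (A : Matrix (Fin N) (Fin N) ℝ) (m : ℕ) (hm : 0 < m)
    (c : ℝ) (hc0 : 0 ≤ c) (hc1 : c < 1)
    (h1 : ∀ x : Fin N → ℝ, ‖A *ᵥ x‖ ≤ ‖x‖)
    (hmc : ∀ x : Fin N → ℝ, ‖(A ^ m) *ᵥ x‖ ≤ c * ‖x‖)
    (e : ℕ → Fin N → ℝ) (he : ∀ t, e (t + 1) = A *ᵥ e t) :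
    Tendsto e atTop (nhds 0) := by
  have hpow : ∀ t j, e (t + j) = (A ^ j) *ᵥ e t := by
    intro t j
    induction j with
    | zero => simp
    | succ j ih =>
      rw [← Nat.add_assoc, he, ih, mulVec_mulVec, ← pow_succ']
  have hmono : ∀ t, ‖e (t + 1)‖ ≤ ‖e t‖ := by
    intro t; rw [he]; exact h1 _
  have hanti : ∀ s t, s ≤ t → ‖e t‖ ≤ ‖e s‖ := by
    intro s t hst
    induction t with
    | zero => simp_all
    | succ t ih =>
      rcases Nat.lt_or_ge s (t+1) with h | h
      · exact (hmono t).trans (ih (Nat.lt_succ_iff.mp h))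
      · have : s = t + 1 := le_antisymm hst h
        simp [this]
  have hq : ∀ q, ‖e (q * m)‖ ≤ c ^ q * ‖e 0‖ := by
    intro q
    induction q with
    | zero => simp
    | succ q ih =>
      have : e ((q + 1) * m) = (A ^ m) *ᵥ e (q * m) := by
        rw [← hpow]; ring_nf
      rw [this, pow_succ]
      calc ‖(A ^ m) *ᵥ e (q * m)‖ ≤ c * ‖e (q * m)‖ := hmc _
        _ ≤ c * (c ^ q * ‖e 0‖) := by nlinarith [norm_nonneg (e (q*m))]
        _ = c ^ q * c * ‖e 0‖ := by ring
  have hbound : ∀ t, ‖e t‖ ≤ c ^ (t / m) * ‖e 0‖ := by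
    intro t
    calc ‖e t‖ ≤ ‖e (t / m * m)‖ := hanti _ _ (Nat.div_mul_le_self t m)
      _ ≤ c ^ (t / m) * ‖e 0‖ := hq _
  have hdiv : Tendsto (fun t : ℕ => t / m) atTop atTop := by
    apply tendsto_atTop_atTop.2
    intro b
    refine ⟨b * m, fun t ht => ?_⟩
    calc b = b * m / m := (Nat.mul_div_cancel b hm).symm
      _ ≤ t / m := Nat.div_le_div_right ht
  have htend : Tendsto (fun t : ℕ => c ^ (t / m) * ‖e 0‖) atTop (nhds 0) := by
    have := ((tendsto_pow_atTop_nhds_zero_of_lt_one hc0 hc1).comp hdiv).mul_const ‖e 0‖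
    simpa using this
  exact squeeze_zero_norm hbound htend

/-- Proposition 2 (asymptotic opinions of the short-term-shift model under static
policies): under Assumption 1, if the controlled input `u^c` is eventually zero,
then the means of the short-term-shift model
`μ^st(t+1) = Λ P μ^st(t) + (I - Λ)(u° + u^c(t))` converge to
`(I - Λ P)⁻¹ (I - Λ) u° ∈ [0,1]^N`, independently of the values of `u^c`. -/
theorem stmt7 (N : ℕ) (hN : 1 ≤ N)
    (P Λ : Matrix (Fin N) (Fin N) ℝ)
    (hPnn : ∀ i j, 0 ≤ P i j)
    (hProw : ∀ i, ∑ j, P i j = 1)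
    (hΛdiag : Λ.IsDiag)
    (hΛ : ∀ i, Λ i i ∈ Set.Icc (0 : ℝ) 1)
    (hconn : ∀ v : Fin N, ∃ (w : Fin N) (k : ℕ), Λ w w < 1 ∧ 0 < (P ^ k) v w)
    (u₀ : Fin N → ℝ) (hu₀ : ∀ v, u₀ v ∈ Set.Icc (0 : ℝ) 1)
    (uc : ℕ → Fin N → ℝ) (T : ℕ)
    (huc : ∀ t : ℕ, T < t → uc t = 0)
    (μst : ℕ → Fin N → ℝ)
    (hμ0 : ∀ v, μst 0 v ∈ Set.Icc (0 : ℝ) 1)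
    (hμ : ∀ t : ℕ, μst (t + 1) = (Λ * P) *ᵥ μst t + (1 - Λ) *ᵥ (u₀ + uc t)) :
    (∀ i, Tendsto (fun t => μst t i) atTop
      (nhds ((((1 - Λ * P)⁻¹ * (1 - Λ)) *ᵥ u₀) i))) ∧
    (∀ i, (((1 - Λ * P)⁻¹ * (1 - Λ)) *ᵥ u₀) i ∈ Set.Icc (0 : ℝ) 1) := by
  classical
  have hL0 : ∀ v, (0:ℝ) ≤ Λ v v := fun v => (hΛ v).1
  have hL1 : ∀ v, Λ v v ≤ 1 := fun v => (hΛ v).2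
  set A := Λ * P with hAdef
  -- entries of A
  have hAentry : ∀ v w, A v w = Λ v v * P v w := by
    intro v w
    rw [hAdef, Matrix.mul_apply, Finset.sum_eq_single v]
    · intro b _ hb
      rw [hΛdiag (Ne.symm hb), zero_mul]
    · intro hv; exact absurd (Finset.mem_univ v) hv
  have hAnn : ∀ v w, 0 ≤ A v w := by
    intro v w; rw [hAentry]; exact mul_nonneg (hL0 v) (hPnn v w)
  have hArow : ∀ v, ∑ w, A v w = Λ v v := by
    intro v
    simp only [hAentry, ← Finset.mul_sum, hProw, mul_one]
  have hAknn : ∀ k v w, 0 ≤ (A ^ k) v w := by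
    intro k
    induction k with
    | zero => intro v w; simp [Matrix.one_apply]; positivity
    | succ k ih =>
      intro v w
      rw [pow_succ, Matrix.mul_apply]
      exact Finset.sum_nonneg fun x _ => mul_nonneg (ih v x) (hAnn x w)
  have hPknn : ∀ k v w, 0 ≤ (P ^ k) v w := by
    intro k
    induction k with
    | zero => intro v w; simp [Matrix.one_apply]; positivity
    | succ k ih =>
      intro v w
      rw [pow_succ, Matrix.mul_apply]
      exact Finset.sum_nonneg fun x _ => mul_nonneg (ih v x) (hPnn x w)
  -- row sums of powers
  set r : ℕ → Fin N → ℝ := fun k v => ∑ w, (A ^ k) v w with hrdef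
  have hmulrow : ∀ (M M' : Matrix (Fin N) (Fin N) ℝ) v,
      ∑ w, (M * M') v w = ∑ x, M v x * (∑ w, M' x w) := by
    intro M M' v
    simp only [Matrix.mul_apply, Finset.mul_sum]
    exact Finset.sum_comm
  have hr0 : ∀ v, r 0 v = 1 := by
    intro v; simp [hrdef, Matrix.one_apply]
  have hr_rec : ∀ k v, r (k+1) v = ∑ x, A v x * r k x := by
    intro k v
    simp only [hrdef, pow_succ']
    exact hmulrow A (A ^ k) v
  have hrnn : ∀ k v, 0 ≤ r k v := by
    intro k v; exact Finset.sum_nonneg fun w _ => hAknn k v w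
  have hrle1 : ∀ k v, r k v ≤ 1 := by
    intro k
    induction k with
    | zero => intro v; rw [hr0]
    | succ k ih =>
      intro v
      rw [hr_rec]
      calc ∑ x, A v x * r k x ≤ ∑ x, A v x * 1 :=
            Finset.sum_le_sum fun x _ => mul_le_mul_of_nonneg_left (ih x) (hAnn v x)
        _ = Λ v v := by simp [hArow]
        _ ≤ 1 := hL1 v
  have hr_anti : ∀ k j v, r (k + j) v ≤ r k v := by
    intro k j v
    have : r (k + j) v = ∑ x, (A ^ k) v x * r j x := by
      simp only [hrdef, pow_add]
      exact hmulrow (A ^ k) (A ^ j) v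
    rw [this]
    calc ∑ x, (A ^ k) v x * r j x ≤ ∑ x, (A ^ k) v x * 1 :=
          Finset.sum_le_sum fun x _ => mul_le_mul_of_nonneg_left (hrle1 j x) (hAknn k v x)
      _ = r k v := by simp [hrdef]
  -- strict row-sum deficiency from connectivity
  have hstrict : ∀ k v w, Λ w w < 1 → 0 < (P ^ k) v w → r (k + 1) v < 1 := by
    intro k
    induction k with
    | zero =>
      intro v w hw hp
      have hvw : v = w := by
        by_contra h
        simp [Matrix.one_apply, h] at hp
      subst hvw
      rw [hr_rec]
      calc ∑ x, A v x * r 0 x = Λ v v := by simp [hr0, hArow]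
        _ < 1 := hw
    | succ k ih =>
      intro v w hw hp
      rcases lt_or_ge (Λ v v) 1 with hv | hv
      · rw [hr_rec]
        calc ∑ x, A v x * r (k+1) x ≤ ∑ x, A v x * 1 :=
              Finset.sum_le_sum fun x _ => mul_le_mul_of_nonneg_left (hrle1 _ x) (hAnn v x)
          _ = Λ v v := by simp [hArow]
          _ < 1 := hv
      · have hv1 : Λ v v = 1 := le_antisymm (hL1 v) hv
        have hsum : (0:ℝ) < ∑ x, P v x * (P ^ k) x w := by
          rw [pow_succ'] at hp
          rwa [Matrix.mul_apply] at hp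
        obtain ⟨x, -, hx⟩ := Finset.exists_lt_of_sum_lt
          (by simpa using hsum : ∑ _x : Fin N, (0:ℝ) < ∑ x, P v x * (P ^ k) x w)
        have hPvx : 0 < P v x := by
          rcases (hPnn v x).lt_or_eq with h | h
          · exact h
          · exfalso; rw [← h, zero_mul] at hx; exact lt_irrefl 0 hx
        have hPk : 0 < (P ^ k) x w := by
          nlinarith [hPknn k x w]
        have hrx : r (k + 1) x < 1 := ih x w hw hPk
        rw [hr_rec]
        have heq : ∀ x', A v x' = P v x' := by
          intro x'; rw [hAentry, hv1, one_mul]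
        calc ∑ x', A v x' * r (k+1) x' = ∑ x', P v x' * r (k+1) x' := by
              simp only [heq]
          _ < ∑ x', P v x' * 1 := by
              refine Finset.sum_lt_sum (fun x' _ =>
                mul_le_mul_of_nonneg_left (hrle1 _ x') (hPnn v x'))
                ⟨x, Finset.mem_univ x, ?_⟩
              exact mul_lt_mul_of_pos_left hrx hPvx
          _ = 1 := by simp [hProw]
  -- a uniform contraction exponent
  choose W K hW hK using hconn
  set m := (Finset.univ.sup K) + 1 with hmdef
  have hm : 0 < m := Nat.succ_pos _
  have hrm : ∀ v, r m v < 1 := by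
    intro v
    have h1 : r (K v + 1) v < 1 := hstrict (K v) v (W v) (hW v) (hK v)
    have h2 : K v + 1 ≤ m := Nat.succ_le_succ (Finset.le_sup (Finset.mem_univ v))
    calc r m v = r ((K v + 1) + (m - (K v + 1))) v := by
          rw [Nat.add_sub_cancel' h2]
      _ ≤ r (K v + 1) v := hr_anti _ _ _
      _ < 1 := h1
  have hNe : Nonempty (Fin N) := ⟨⟨0, hN⟩⟩
  have hune : (Finset.univ : Finset (Fin N)).Nonempty := Finset.univ_nonempty
  set c := Finset.univ.sup' hune (r m) with hcdef
  have hc1 : c < 1 := (Finset.sup'_lt_iff hune).mpr fun v _ => hrm v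
  have hc0 : 0 ≤ c :=
    le_trans (hrnn m ⟨0, hN⟩) (Finset.le_sup' (r m) (Finset.mem_univ _))
  have hcr : ∀ v, r m v ≤ c := fun v => Finset.le_sup' (r m) (Finset.mem_univ v)
  -- norm bounds
  have hgen : ∀ (M : Matrix (Fin N) (Fin N) ℝ), (∀ v w, 0 ≤ M v w) →
      ∀ (x : Fin N → ℝ) (v : Fin N), |(M *ᵥ x) v| ≤ (∑ w, M v w) * ‖x‖ := by
    intro M hM x v
    have hv : (M *ᵥ x) v = ∑ w, M v w * x w := by
      simp [Matrix.mulVec, dotProduct]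
    rw [hv]
    calc |∑ w, M v w * x w| ≤ ∑ w, |M v w * x w| := Finset.abs_sum_le_sum_abs _ _
      _ ≤ ∑ w, M v w * ‖x‖ := by
          refine Finset.sum_le_sum fun w _ => ?_
          rw [abs_mul, abs_of_nonneg (hM v w)]
          exact mul_le_mul_of_nonneg_left (by simpa using norm_le_pi_norm x w) (hM v w)
      _ = (∑ w, M v w) * ‖x‖ := (Finset.sum_mul _ _ _).symm
  have h1 : ∀ x : Fin N → ℝ, ‖A *ᵥ x‖ ≤ ‖x‖ := by
    intro x
    rw [pi_norm_le_iff_of_nonneg (norm_nonneg x)]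
    intro v
    calc ‖(A *ᵥ x) v‖ = |(A *ᵥ x) v| := Real.norm_eq_abs _
      _ ≤ (∑ w, A v w) * ‖x‖ := hgen A hAnn x v
      _ = Λ v v * ‖x‖ := by rw [hArow]
      _ ≤ 1 * ‖x‖ := mul_le_mul_of_nonneg_right (hL1 v) (norm_nonneg x)
      _ = ‖x‖ := one_mul _
  have hmc : ∀ x : Fin N → ℝ, ‖(A ^ m) *ᵥ x‖ ≤ c * ‖x‖ := by
    intro x
    rw [pi_norm_le_iff_of_nonneg (mul_nonneg hc0 (norm_nonneg x))]
    intro v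
    calc ‖((A ^ m) *ᵥ x) v‖ = |((A ^ m) *ᵥ x) v| := Real.norm_eq_abs _
      _ ≤ (∑ w, (A ^ m) v w) * ‖x‖ := hgen (A ^ m) (hAknn m) x v
      _ = r m v * ‖x‖ := rfl
      _ ≤ c * ‖x‖ := mul_le_mul_of_nonneg_right (hcr v) (norm_nonneg x)
  -- invertibility of 1 - A
  have hker : Function.Injective ((1 - A).mulVec) := by
    intro a b hab
    have hz : (1 - A) *ᵥ (a - b) = 0 := by
      rw [mulVec_sub, hab, sub_self]
    have hxA : a - b = A *ᵥ (a - b) := by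
      rw [sub_mulVec, one_mulVec] at hz
      exact (sub_eq_zero.mp hz)
    have hxj : ∀ j, (A ^ j) *ᵥ (a - b) = a - b := by
      intro j
      induction j with
      | zero => simp
      | succ j ih => rw [pow_succ', ← mulVec_mulVec, ih, ← hxA]
    have hnx : ‖a - b‖ ≤ c * ‖a - b‖ := by
      conv_lhs => rw [← hxj m]
      exact hmc _
    have : ‖a - b‖ = 0 := by nlinarith [norm_nonneg (a - b)]
    have := norm_eq_zero.mp this
    exact sub_eq_zero.mp this
  have hunit : IsUnit (1 - A) := Matrix.mulVec_injective_iff_isUnit.mp hker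
  have hdet : IsUnit (1 - A).det := (Matrix.isUnit_iff_isUnit_det _).mp hunit
  have hinv : (1 - A) * (1 - A)⁻¹ = 1 := Matrix.mul_nonsing_inv _ hdet
  set μs := ((1 - A)⁻¹ * (1 - Λ)) *ᵥ u₀ with hμsdef
  have hfix : μs = A *ᵥ μs + (1 - Λ) *ᵥ u₀ := by
    have h2 : (1 - A) *ᵥ μs = (1 - Λ) *ᵥ u₀ := by
      rw [hμsdef, mulVec_mulVec, ← Matrix.mul_assoc, hinv, Matrix.one_mul]
    rw [sub_mulVec, one_mulVec] at h2
    rw [← h2]; abel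
  -- convergence of μst
  have hconv : ∀ i, Tendsto (fun t => μst t i) atTop (nhds (μs i)) := by
    have he : ∀ t, (fun s => μst (T + 1 + s) - μs) (t + 1)
        = A *ᵥ (fun s => μst (T + 1 + s) - μs) t := by
      intro t
      show μst (T + 1 + (t + 1)) - μs = A *ᵥ (μst (T + 1 + t) - μs)
      have h0 : uc (T + 1 + t) = 0 := huc _ (by omega)
      have h3 : T + 1 + (t + 1) = (T + 1 + t) + 1 := by omega
      rw [h3, hμ (T + 1 + t), h0, add_zero, mulVec_sub]
      conv_lhs => rw [hfix]
      abel
    have htend0 : Tendsto (fun t => μst (T + 1 + t) - μs) atTop (nhds 0) :=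
      stmt7_contr A m hm c hc0 hc1 h1 hmc _ he
    intro i
    have h2 : Tendsto (fun t => μst (T + 1 + t) i - μs i) atTop (nhds 0) := by
      have := (tendsto_pi_nhds.mp htend0) i
      simpa using this
    have h3 : Tendsto (fun t => μst (T + 1 + t) i) atTop (nhds (μs i)) := by
      have := h2.add_const (μs i)
      simpa using this
    have h4 : Tendsto (fun t => μst (t + (T + 1)) i) atTop (nhds (μs i)) := by
      have : (fun t => μst (t + (T + 1)) i) = fun t => μst (T + 1 + t) i := by
        funext t; rw [Nat.add_comm]
      rw [this]; exact h3
    exact (tendsto_add_atTop_iff_nat (T + 1)).mp h4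
  -- the limit lies in [0,1]
  have hmem : ∀ i, μs i ∈ Set.Icc (0:ℝ) 1 := by
    set ν : ℕ → Fin N → ℝ :=
      fun t => Nat.rec (motive := fun _ => Fin N → ℝ) u₀
        (fun _ x => A *ᵥ x + (1 - Λ) *ᵥ u₀) t with hνdef
    have hνs : ∀ t, ν (t + 1) = A *ᵥ ν t + (1 - Λ) *ᵥ u₀ := fun t => rfl
    have h1Λ : ∀ (x : Fin N → ℝ) v, ((1 - Λ) *ᵥ x) v = (1 - Λ v v) * x v := by
      intro x v
      have hv : ((1 - Λ) *ᵥ x) v = ∑ w, ((1:Matrix (Fin N) (Fin N) ℝ) v w - Λ v w) * x w := by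
        simp [Matrix.mulVec, dotProduct, Matrix.sub_apply]
      rw [hv, Finset.sum_eq_single v]
      · rw [Matrix.one_apply_eq]
      · intro b _ hb
        rw [Matrix.one_apply_ne (Ne.symm hb), hΛdiag (Ne.symm hb), sub_zero, zero_mul]
      · intro hv'; exact absurd (Finset.mem_univ v) hv'
    have hνmem : ∀ t v, ν t v ∈ Set.Icc (0:ℝ) 1 := by
      intro t
      induction t with
      | zero => exact hu₀
      | succ t ih =>
        intro v
        have hAv : (A *ᵥ ν t) v = ∑ w, A v w * ν t w := by
          simp [Matrix.mulVec, dotProduct]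
        have hlow : 0 ≤ (A *ᵥ ν t) v := by
          rw [hAv]
          exact Finset.sum_nonneg fun w _ => mul_nonneg (hAnn v w) (ih w).1
        have hup : (A *ᵥ ν t) v ≤ Λ v v := by
          rw [hAv]
          calc ∑ w, A v w * ν t w ≤ ∑ w, A v w * 1 :=
                Finset.sum_le_sum fun w _ => mul_le_mul_of_nonneg_left (ih w).2 (hAnn v w)
            _ = Λ v v := by simp [hArow]
        have hval : ν (t+1) v = (A *ᵥ ν t) v + (1 - Λ v v) * u₀ v := by
          rw [hνs, Pi.add_apply, h1Λ]
        constructor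
        · rw [hval]
          have := (hu₀ v).1
          have h1v := hL1 v
          nlinarith
        · rw [hval]
          have := (hu₀ v).2
          have h0v := (hu₀ v).1
          have h1v := hL1 v
          nlinarith
    have he2 : ∀ t, (fun s => ν s - μs) (t + 1) = A *ᵥ (fun s => ν s - μs) t := by
      intro t
      show ν (t + 1) - μs = A *ᵥ (ν t - μs)
      rw [hνs, mulVec_sub]
      conv_lhs => rw [hfix]
      abel
    have htend0 : Tendsto (fun t => ν t - μs) atTop (nhds 0) :=
      stmt7_contr A m hm c hc0 hc1 h1 hmc _ he2
    intro i
    have h2 : Tendsto (fun t => ν t i) atTop (nhds (μs i)) := by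
      have := ((tendsto_pi_nhds.mp htend0) i).add_const (μs i)
      simpa using this
    exact isClosed_Icc.mem_of_tendsto h2 (Filter.Eventually.of_forall fun t => hνmem t i)
  exact ⟨hconv, hmem⟩
end

section
/- (Comparison of long-term and short-term shift models, Proposition 3.) Under Assumption 1, let u° ∈ [0,1]^N, let T ∈ ℕ with T ≥ 1, let ν ∈ ℝ^N be entrywise strictly positive, and let ν^r ∈ ℝ^N be entrywise nonnegative. Then the asymptotic mean opinion of the long-term-shift model under the static policy, μ_∞ = (I − ΛP)^{-1}(I − Λ)(u° + T·ν + ν^r), strictly exceeds the asymptotic mean opinion of the short-term-shift model, μ_∞^st = (I − ΛP)^{-1}(I − Λ) u°, in every component: for all indices v, (μ_∞^st)_v < (μ_∞)_v. -/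
open Matrix

section aux

variable {N : ℕ} {P Λ : Matrix (Fin N) (Fin N) ℝ}

private lemma powNN (hPnn : ∀ i j, 0 ≤ P i j) : ∀ k i j, 0 ≤ (P ^ k) i j := by
  intro k
  induction k with
  | zero => intro i j; simp [Matrix.one_apply]; split <;> norm_num
  | succ k ih =>
      intro i j
      rw [pow_succ, Matrix.mul_apply]
      exact Finset.sum_nonneg fun l _ => mul_nonneg (ih i l) (hPnn l j)

private lemma diag_mul_apply (hΛdiag : Λ.IsDiag) (i j : Fin N) :
    (Λ * P) i j = Λ i i * P i j := by
  rw [Matrix.mul_apply]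
  rw [Finset.sum_eq_single i]
  · intro k _ hk; rw [hΛdiag hk.symm, zero_mul]
  · intro h; exact absurd (Finset.mem_univ i) h

private lemma diag_mulVec (hΛdiag : Λ.IsDiag) (x : Fin N → ℝ) (v : Fin N) :
    (Λ *ᵥ x) v = Λ v v * x v := by
  rw [Matrix.mulVec, dotProduct]
  rw [Finset.sum_eq_single v]
  · intro k _ hk; rw [hΛdiag hk.symm, zero_mul]
  · intro h; exact absurd (Finset.mem_univ v) h

private lemma diagmul_mulVec (hΛdiag : Λ.IsDiag) (x : Fin N → ℝ) (v : Fin N) :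
    ((Λ * P) *ᵥ x) v = Λ v v * (P *ᵥ x) v := by
  simp only [Matrix.mulVec, dotProduct, diag_mul_apply hΛdiag, Finset.mul_sum, mul_assoc]

private lemma key (hPnn : ∀ i j, 0 ≤ P i j) (hProw : ∀ i, ∑ j, P i j = 1)
    (hΛ : ∀ i, Λ i i ∈ Set.Icc (0 : ℝ) 1)
    (hconn : ∀ v : Fin N, ∃ (w : Fin N) (k : ℕ), Λ w w < 1 ∧ 0 < (P ^ k) v w)
    (y c : Fin N → ℝ) (m : ℝ)
    (hfix : ∀ v, y v = Λ v v * (P *ᵥ y) v + c v)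
    (hc : ∀ v, 0 ≤ c v)
    (hmle : ∀ j, m ≤ y j)
    (hstrict : ∀ v, Λ v v < 1 → m < Λ v v * m + c v) :
    ∀ v, m < y v := by
  have hPy : ∀ v, m ≤ (P *ᵥ y) v := by
    intro v
    have h1 : ∑ j, P v j * m ≤ ∑ j, P v j * y j :=
      Finset.sum_le_sum fun j _ => mul_le_mul_of_nonneg_left (hmle j) (hPnn v j)
    calc m = ∑ j, P v j * m := by rw [← Finset.sum_mul, hProw v, one_mul]
    _ ≤ ∑ j, P v j * y j := h1
    _ = (P *ᵥ y) v := rfl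
  have hne : ∀ v, y v = m → Λ v v = 1 ∧ ∀ j, 0 < P v j → y j = m := by
    intro v hv
    have hl1 : Λ v v = 1 := by
      by_contra h
      have hlt : Λ v v < 1 := lt_of_le_of_ne (hΛ v).2 h
      have hgt : m < y v := by
        calc m < Λ v v * m + c v := hstrict v hlt
        _ ≤ Λ v v * (P *ᵥ y) v + c v := by
              have := mul_le_mul_of_nonneg_left (hPy v) (hΛ v).1
              linarith
        _ = y v := (hfix v).symm
      exact absurd hv (ne_of_gt hgt)
    refine ⟨hl1, ?_⟩
    have h2 : (P *ᵥ y) v = m := by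
      have h3 := hfix v; rw [hl1, one_mul] at h3
      have := hPy v; have := hc v; linarith
    intro j hj
    by_contra hyj
    have hyj' : m < y j := lt_of_le_of_ne (hmle j) (Ne.symm hyj)
    have hlt2 : m < (P *ᵥ y) v := by
      have hsum : ∑ k, P v k * m < ∑ k, P v k * y k := by
        apply Finset.sum_lt_sum
        · intro k _; exact mul_le_mul_of_nonneg_left (hmle k) (hPnn v k)
        · exact ⟨j, Finset.mem_univ j, by nlinarith⟩
      calc m = ∑ k, P v k * m := by rw [← Finset.sum_mul, hProw v, one_mul]
      _ < ∑ k, P v k * y k := hsum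
      _ = (P *ᵥ y) v := rfl
    rw [h2] at hlt2; exact lt_irrefl m hlt2
  have prop : ∀ k v w, y v = m → 0 < (P ^ k) v w → y w = m := by
    intro k
    induction k with
    | zero =>
        intro v w hv hp
        rw [pow_zero] at hp
        rcases eq_or_ne v w with rfl | hvw
        · exact hv
        · rw [Matrix.one_apply_ne hvw] at hp; exact absurd hp (lt_irrefl 0)
    | succ k ih =>
        intro v w hv hp
        rw [pow_succ', Matrix.mul_apply] at hp
        have : ∃ j ∈ Finset.univ, (0 : ℝ) < P v j * (P ^ k) j w := by
          apply Finset.exists_lt_of_sum_lt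
          simpa using hp
        obtain ⟨j, -, hj⟩ := this
        have hPj : 0 < P v j := by
          rcases (hPnn v j).lt_or_eq with h | h
          · exact h
          · rw [← h, zero_mul] at hj; exact absurd hj (lt_irrefl 0)
        have hPk : 0 < (P ^ k) j w := by
          rcases (powNN hPnn k j w).lt_or_eq with h | h
          · exact h
          · rw [← h, mul_zero] at hj; exact absurd hj (lt_irrefl 0)
        exact ih j w ((hne v hv).2 j hPj) hPk
  intro v
  rcases lt_or_eq_of_le (hmle v) with h | h
  · exact h
  · exfalso
    obtain ⟨w, k, hw1, hwk⟩ := hconn v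
    have hwm : y w = m := prop k v w h.symm hwk
    have := (hne w hwm).1
    linarith

private lemma kernel_nonneg (hN : 1 ≤ N) (hPnn : ∀ i j, 0 ≤ P i j)
    (hProw : ∀ i, ∑ j, P i j = 1)
    (hΛ : ∀ i, Λ i i ∈ Set.Icc (0 : ℝ) 1)
    (hconn : ∀ v : Fin N, ∃ (w : Fin N) (k : ℕ), Λ w w < 1 ∧ 0 < (P ^ k) v w)
    (y : Fin N → ℝ) (hy : ∀ v, y v = Λ v v * (P *ᵥ y) v) : ∀ v, 0 ≤ y v := by
  obtain ⟨v0, -, hmin⟩ := Finset.exists_min_image Finset.univ y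
    ⟨⟨0, hN⟩, Finset.mem_univ _⟩
  set m := y v0 with hm
  by_contra h
  push_neg at h
  obtain ⟨v, hv⟩ := h
  have hm0 : m < 0 := lt_of_le_of_lt (hmin v (Finset.mem_univ v)) hv
  have hk := key hPnn hProw hΛ hconn y (fun _ => 0) m
    (fun v => by simpa using hy v) (fun _ => le_refl 0)
    (fun j => hmin j (Finset.mem_univ j))
    (fun w hlt => by
      show m < Λ w w * m + 0
      nlinarith [mul_pos (sub_pos.mpr hlt) (neg_pos.mpr hm0)])
  exact lt_irrefl m (hk v0)

private lemma kernel_triv (hN : 1 ≤ N) (hPnn : ∀ i j, 0 ≤ P i j)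
    (hProw : ∀ i, ∑ j, P i j = 1) (hΛdiag : Λ.IsDiag)
    (hΛ : ∀ i, Λ i i ∈ Set.Icc (0 : ℝ) 1)
    (hconn : ∀ v : Fin N, ∃ (w : Fin N) (k : ℕ), Λ w w < 1 ∧ 0 < (P ^ k) v w)
    (y : Fin N → ℝ) (hy : (1 - Λ * P) *ᵥ y = 0) : y = 0 := by
  have hfix : ∀ v, y v = Λ v v * (P *ᵥ y) v := by
    intro v
    have := congrFun hy v
    rw [Matrix.sub_mulVec, Matrix.one_mulVec] at this
    have h2 : y v - ((Λ * P) *ᵥ y) v = 0 := this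
    rw [diagmul_mulVec hΛdiag] at h2
    linarith
  have h1 := kernel_nonneg hN hPnn hProw hΛ hconn y hfix
  have h2 := kernel_nonneg hN hPnn hProw hΛ hconn (-y) (by
    intro v
    have := hfix v
    simp only [Matrix.mulVec_neg, Pi.neg_apply, mul_neg]
    linarith)
  funext v
  have ha := h1 v
  have hb := h2 v
  simp only [Pi.neg_apply] at hb
  simp only [Pi.zero_apply]
  linarith

end aux

/-- Proposition 3 (comparison of long-term and short-term shift models): under
Assumption 1, with `T ≥ 1`, `ν` entrywise strictly positive and `ν^r` entrywise
nonnegative, the asymptotic mean opinions of the long-term-shift model,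
`μ_∞ = (I - Λ P)⁻¹ (I - Λ)(u° + T ν + ν^r)`, strictly exceed those of the
short-term-shift model, `μ_∞^st = (I - Λ P)⁻¹ (I - Λ) u°`, in every component. -/
theorem stmt8 (N : ℕ) (hN : 1 ≤ N)
    (P Λ : Matrix (Fin N) (Fin N) ℝ)
    (hPnn : ∀ i j, 0 ≤ P i j)
    (hProw : ∀ i, ∑ j, P i j = 1)
    (hΛdiag : Λ.IsDiag)
    (hΛ : ∀ i, Λ i i ∈ Set.Icc (0 : ℝ) 1)
    (hconn : ∀ v : Fin N, ∃ (w : Fin N) (k : ℕ), Λ w w < 1 ∧ 0 < (P ^ k) v w)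
    (u₀ : Fin N → ℝ) (hu₀ : ∀ v, u₀ v ∈ Set.Icc (0 : ℝ) 1)
    (T : ℕ) (hT : 1 ≤ T)
    (ν νr : Fin N → ℝ)
    (hν : ∀ v, 0 < ν v) (hνr : ∀ v, 0 ≤ νr v) :
    ∀ v, (((1 - Λ * P)⁻¹ * (1 - Λ)) *ᵥ u₀) v <
      (((1 - Λ * P)⁻¹ * (1 - Λ)) *ᵥ (u₀ + (T : ℝ) • ν + νr)) v := by
  set A := (1 - Λ * P)⁻¹ * (1 - Λ) with hA
  set d : Fin N → ℝ := (T : ℝ) • ν + νr with hd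
  have hdpos : ∀ v, 0 < d v := by
    intro v
    have hT1 : (1 : ℝ) ≤ (T : ℝ) := by exact_mod_cast hT
    have := hν v
    have := hνr v
    simp only [hd, Pi.add_apply, Pi.smul_apply, smul_eq_mul]
    nlinarith
  -- invertibility
  have hUnit : IsUnit (1 - Λ * P) := by
    rw [← Matrix.mulVec_injective_iff_isUnit]
    intro a b hab
    have := kernel_triv hN hPnn hProw hΛdiag hΛ hconn (a - b)
      (by rw [Matrix.mulVec_sub, hab, sub_self])
    exact sub_eq_zero.mp this
  have hdet : IsUnit (1 - Λ * P).det := (Matrix.isUnit_iff_isUnit_det _).mp hUnit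
  -- fixed point equation for z = A *ᵥ d
  set z : Fin N → ℝ := A *ᵥ d with hz
  have hMz : (1 - Λ * P) *ᵥ z = (1 - Λ) *ᵥ d := by
    rw [hz, Matrix.mulVec_mulVec, hA, ← Matrix.mul_assoc,
      Matrix.mul_nonsing_inv _ hdet, Matrix.one_mul]
  have hfix : ∀ v, z v = Λ v v * (P *ᵥ z) v + (1 - Λ v v) * d v := by
    intro v
    have h1 := congrFun hMz v
    rw [Matrix.sub_mulVec, Matrix.sub_mulVec, Matrix.one_mulVec, Matrix.one_mulVec] at h1
    have h2 : z v - ((Λ * P) *ᵥ z) v = d v - (Λ *ᵥ d) v := h1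
    rw [diagmul_mulVec hΛdiag, diag_mulVec hΛdiag] at h2
    ring_nf
    ring_nf at h2
    linarith
  -- positivity of z
  have hzpos : ∀ v, 0 < z v := by
    obtain ⟨v0, -, hmin⟩ := Finset.exists_min_image Finset.univ z
      ⟨⟨0, hN⟩, Finset.mem_univ _⟩
    set m := z v0 with hm
    by_contra h
    push_neg at h
    obtain ⟨v, hv⟩ := h
    have hm0 : m ≤ 0 := le_trans (hmin v (Finset.mem_univ v)) hv
    have hk := key hPnn hProw hΛ hconn z (fun v => (1 - Λ v v) * d v) m hfix
      (fun v => mul_nonneg (by linarith [(hΛ v).2]) (hdpos v).le)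
      (fun j => hmin j (Finset.mem_univ j))
      (fun w hlt => by
        show m < Λ w w * m + (1 - Λ w w) * d w
        have e1 : m ≤ Λ w w * m := by
          nlinarith [mul_nonneg (sub_nonneg.mpr (hΛ w).2) (neg_nonneg.mpr hm0)]
        have e2 : 0 < (1 - Λ w w) * d w :=
          mul_pos (by linarith) (hdpos w)
        linarith)
    exact lt_irrefl m (hk v0)
  intro v
  have hsplit : A *ᵥ (u₀ + (T : ℝ) • ν + νr) = A *ᵥ u₀ + z := by
    rw [hz, hd, ← Matrix.mulVec_add, add_assoc]
  rw [hsplit]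
  have := hzpos v
  simp only [Pi.add_apply]
  linarith
end

section
/- (Discrete-time Lyapunov equation for the opinion dynamics.) Under Assumption 1, there exists a unique symmetric N×N real matrix Q satisfying (ΛP)^⊤ Q (ΛP) − Q = −I, and this Q is positive definite; explicitly, Q = ∑_{k=0}^∞ ((ΛP)^⊤)^k (ΛP)^k, where the series converges. -/
/-!
Write `A = ΛP`. It is entrywise between `0` and `P`, so its row sums `A^k 𝟙` are at most `1`
and decrease in `k`. A row sum drops strictly below `1` at `w` when `λ_w < 1`, and this deficit
propagates backwards along the edges of `P`: if `P v u > 0` and `(A^k 𝟙) u < 1` then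
`(A^(k+1) 𝟙) v < 1`. By Assumption 1 every row of some power `A^m` thus sums to less than `1`,
i.e. `‖A^m‖_∞ < 1`, so `‖A^n‖` and `‖(Aᵀ)^n‖ ≤ N ‖A^n‖` are summable. The series
`Q = ∑ (Aᵀ)^k A^k` then converges, solves `Aᵀ Q A = Q - 1` by shifting the index, and is the only
solution because any solution `X` satisfies `X = ∑_{k<n} (Aᵀ)^k A^k + (Aᵀ)^n X A^n`.
It is positive definite as `1` plus a limit of Gram matrices `(A^k)ᵀ A^k`.
-/

open Matrix Filter Topology

section TopologicalRing

variable {R : Type*} [Ring R] {a b q : R}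

theorem eq_sum_range_add_of_mul_mul_sub_eq_neg_one {x : R} (hx : b * x * a - x = -1) (n : ℕ) :
    x = ∑ k ∈ Finset.range n, b ^ k * a ^ k + b ^ n * x * a ^ n := by
  induction n with
  | zero => simp
  | succ n ih =>
    have hstep : b ^ (n + 1) * x * a ^ (n + 1) = b ^ n * (b * x * a) * a ^ n := by
      simp only [pow_succ b, pow_succ' a, mul_assoc]
    rw [hstep, sub_eq_iff_eq_add.mp hx, Finset.sum_range_succ]
    conv_lhs => rw [ih]
    noncomm_ring

variable [TopologicalSpace R] [IsTopologicalRing R] [T2Space R]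

theorem mul_mul_sub_eq_neg_one_of_hasSum (h : HasSum (fun k => b ^ k * a ^ k) q) :
    b * q * a - q = -1 := by
  have hshift : HasSum (fun k => b ^ (k + 1) * a ^ (k + 1)) (b * q * a) := by
    simpa only [pow_succ' b, pow_succ a, mul_assoc] using (h.mul_left b).mul_right a
  simp [hshift.unique ((hasSum_nat_add_iff' 1).mpr h)]

theorem eq_of_mul_mul_sub_eq_neg_one {x : R} (h : HasSum (fun k => b ^ k * a ^ k) q)
    (hx : b * x * a - x = -1) (hlim : Tendsto (fun n => b ^ n * x * a ^ n) atTop (𝓝 0)) :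
    x = q := by
  have := h.tendsto_sum_nat.add hlim
  rw [add_zero, ← funext (eq_sum_range_add_of_mul_mul_sub_eq_neg_one hx)] at this
  exact tendsto_nhds_unique tendsto_const_nhds this

end TopologicalRing

theorem summable_pow_div {ρ : ℝ} (h0 : 0 ≤ ρ) (h1 : ρ < 1) {m : ℕ} (hm : 0 < m) :
    Summable fun n : ℕ => ρ ^ (n / m) := by
  have : NeZero m := ⟨hm.ne'⟩
  rw [← (Nat.divModEquiv m).symm.summable_iff]
  have hcomp : (fun n : ℕ => ρ ^ (n / m)) ∘ (Nat.divModEquiv m).symm = fun p => ρ ^ p.1 * 1 := by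
    funext p
    simp [Nat.divModEquiv, add_comm, Nat.add_mul_div_right _ _ hm, Nat.div_eq_of_lt p.2.2]
  rw [hcomp]
  exact (summable_geometric_of_lt_one h0 h1).mul_of_nonneg (g := fun _ : Fin m => (1 : ℝ))
    .of_finite (fun _ => by positivity) fun _ => zero_le_one

section NormedRing

variable {R : Type*} [NormedRing R] {a b : R}

theorem norm_pow_add_mul_le (a : R) (r m q : ℕ) : ‖a ^ (r + m * q)‖ ≤ ‖a ^ r‖ * ‖a ^ m‖ ^ q := by
  induction q with
  | zero => simp
  | succ q ih =>
    calc ‖a ^ (r + m * (q + 1))‖ = ‖a ^ m * a ^ (r + m * q)‖ := by rw [← pow_add]; ring_nf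
    _ ≤ ‖a ^ m‖ * (‖a ^ r‖ * ‖a ^ m‖ ^ q) := (norm_mul_le _ _).trans (by gcongr)
    _ = ‖a ^ r‖ * ‖a ^ m‖ ^ (q + 1) := by ring

theorem summable_norm_pow_of_norm_pow_lt_one {m : ℕ} (hm : 0 < m) (h : ‖a ^ m‖ < 1) :
    Summable fun n => ‖a ^ n‖ := by
  refine .of_nonneg_of_le (fun _ => norm_nonneg _) (fun n => ?_)
    ((summable_pow_div (norm_nonneg _) h hm).mul_left (∑ r ∈ Finset.range m, ‖a ^ r‖))
  calc ‖a ^ n‖ = ‖a ^ (n % m + m * (n / m))‖ := by rw [Nat.mod_add_div]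
  _ ≤ ‖a ^ (n % m)‖ * ‖a ^ m‖ ^ (n / m) := norm_pow_add_mul_le a _ _ _
  _ ≤ (∑ r ∈ Finset.range m, ‖a ^ r‖) * ‖a ^ m‖ ^ (n / m) := by
    gcongr
    exact Finset.single_le_sum (fun _ _ => norm_nonneg _) (Finset.mem_range.mpr (Nat.mod_lt n hm))

theorem tendsto_pow_mul_mul_pow_nhds_zero (ha : Tendsto (fun n => ‖a ^ n‖) atTop (𝓝 0))
    (hb : Tendsto (fun n => ‖b ^ n‖) atTop (𝓝 0)) (x : R) :
    Tendsto (fun n => b ^ n * x * a ^ n) atTop (𝓝 0) := by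
  refine squeeze_zero_norm (fun n => ?_) (by simpa using (hb.mul_const ‖x‖).mul ha)
  exact (norm_mul_le _ _).trans (mul_le_mul_of_nonneg_right (norm_mul_le _ _) (norm_nonneg _))

theorem summable_pow_mul_pow [CompleteSpace R] (ha : Summable fun n => ‖a ^ n‖)
    (hb : Summable fun n => ‖b ^ n‖) : Summable fun k => b ^ k * a ^ k :=
  .of_norm_bounded (ha.mul_left (∑' n, ‖b ^ n‖)) fun k => (norm_mul_le _ _).trans
    (mul_le_mul_of_nonneg_right (hb.le_tsum k fun _ _ => norm_nonneg _) (norm_nonneg _))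

end NormedRing

namespace Matrix

section LinftyOpNorm

attribute [local instance] Matrix.linftyOpSeminormedAddCommGroup

variable {m n α : Type*} [Fintype m] [Fintype n] [SeminormedAddCommGroup α]

theorem linfty_opNNNorm_transpose_le (M : Matrix m n α) :
    ‖Mᵀ‖₊ ≤ Fintype.card m * ‖M‖₊ := by
  rw [linfty_opNNNorm_def Mᵀ]
  refine Finset.sup_le fun j _ => ?_
  calc ∑ i, ‖Mᵀ j i‖₊ ≤ ∑ _i : m, ‖M‖₊ := Finset.sum_le_sum fun i _ => by
        rw [linfty_opNNNorm_def]
        exact (Finset.single_le_sum (fun _ _ => zero_le) (Finset.mem_univ j)).trans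
          (Finset.le_sup (f := fun i => ∑ j, ‖M i j‖₊) (Finset.mem_univ i))
  _ = Fintype.card m * ‖M‖₊ := by simp [nsmul_eq_mul]

theorem linfty_opNorm_transpose_le (M : Matrix m n α) : ‖Mᵀ‖ ≤ Fintype.card m * ‖M‖ := by
  exact_mod_cast linfty_opNNNorm_transpose_le M

theorem linfty_opNorm_lt_of_forall_sum_norm_lt {r : ℝ} (hr : 0 < r) (M : Matrix m n α)
    (h : ∀ i, ∑ j, ‖M i j‖ < r) : ‖M‖ < r := by
  lift r to NNReal using hr.le
  rw [linfty_opNorm_def, NNReal.coe_lt_coe, Finset.sup_lt_iff (by exact_mod_cast hr)]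
  exact fun i _ => by rw [← NNReal.coe_lt_coe]; push_cast; exact h i

end LinftyOpNorm

section PosSemidef

variable {n R : Type*} [Fintype n] [Ring R] [PartialOrder R] [StarRing R] [TopologicalSpace R]
  [IsTopologicalRing R] [ContinuousStar R] [T2Space R] [IsOrderedAddMonoid R]
  [OrderClosedTopology R]

theorem PosSemidef.of_hasSum {ι : Type*} {f : ι → Matrix n n R} {Q : Matrix n n R}
    (hf : HasSum f Q) (h : ∀ i, (f i).PosSemidef) : Q.PosSemidef := by
  refine .of_dotProduct_mulVec_nonneg ?_ fun x => ?_
  · refine hf.matrix_conjTranspose.unique ?_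
    simpa only [(h _).isHermitian.eq] using hf
  · let quad : Matrix n n R →+ R :=
      { toFun M := star x ⬝ᵥ (M *ᵥ x)
        map_zero' := by simp
        map_add' M M' := by simp [add_mulVec, dotProduct_add] }
    have hquad : Continuous quad :=
      continuous_const.dotProduct (continuous_id.matrix_mulVec continuous_const)
    exact (hf.map quad hquad).nonneg fun i => (h i).dotProduct_mulVec_nonneg x

theorem posDef_of_hasSum_conjTranspose_pow_mul_pow [DecidableEq n] [StarOrderedRing R]
    [NoZeroDivisors R] {A Q : Matrix n n R} (h : HasSum (fun k => Aᴴ ^ k * A ^ k) Q) :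
    Q.PosDef := by
  have htail : (Q - 1).PosSemidef := by
    refine .of_hasSum (f := fun k => Aᴴ ^ (k + 1) * A ^ (k + 1)) ?_ fun k => ?_
    · simpa using (hasSum_nat_add_iff' 1).mpr h
    · rw [← conjTranspose_pow]
      exact posSemidef_conjTranspose_mul_self _
  simpa using PosDef.one.add_posSemidef htail

end PosSemidef

section Substochastic

variable {n : Type*} [Fintype n] [DecidableEq n] {A P : Matrix n n ℝ}

theorem pow_succ_mulVec_one (A : Matrix n n ℝ) (k : ℕ) :
    A ^ (k + 1) *ᵥ 1 = A *ᵥ (A ^ k *ᵥ 1) := by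
  rw [pow_succ', mulVec_mulVec]

theorem pow_mulVec_one_mem_Icc (hA0 : ∀ i j, 0 ≤ A i j) (hAP : ∀ i j, A i j ≤ P i j)
    (hP : P ∈ rowStochastic ℝ n) (k : ℕ) (v : n) : (A ^ k *ᵥ 1) v ∈ Set.Icc 0 1 := by
  induction k generalizing v with
  | zero => simp
  | succ k ih =>
    rw [pow_succ_mulVec_one, mulVec, dotProduct]
    refine ⟨Finset.sum_nonneg fun u _ => mul_nonneg (hA0 v u) (ih u).1, ?_⟩
    calc ∑ u, A v u * (A ^ k *ᵥ 1) u ≤ ∑ u, P v u := Finset.sum_le_sum fun u _ =>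
          (mul_le_of_le_one_right (hA0 v u) (ih u).2).trans (hAP v u)
    _ = 1 := sum_row_of_mem_rowStochastic hP v

theorem pow_succ_mulVec_one_le (hA0 : ∀ i j, 0 ≤ A i j) (hAP : ∀ i j, A i j ≤ P i j)
    (hP : P ∈ rowStochastic ℝ n) (k : ℕ) (v : n) : (A ^ (k + 1) *ᵥ 1) v ≤ (A ^ k *ᵥ 1) v := by
  rw [pow_succ, ← mulVec_mulVec, mulVec, dotProduct, mulVec, dotProduct]
  refine Finset.sum_le_sum fun u _ => ?_
  simpa using mul_le_of_le_one_right (pow_apply_nonneg hA0 k v u)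
    (pow_mulVec_one_mem_Icc hA0 hAP hP 1 u).2

theorem pow_succ_mulVec_one_lt_one (hA0 : ∀ i j, 0 ≤ A i j) (hAP : ∀ i j, A i j ≤ P i j)
    (hP : P ∈ rowStochastic ℝ n) {k : ℕ} {v u : n} (hvu : 0 < P v u)
    (hu : (A ^ k *ᵥ 1) u < 1) : (A ^ (k + 1) *ᵥ 1) v < 1 := by
  have hle : ∀ u, (A ^ k *ᵥ 1) u ∈ Set.Icc 0 1 := pow_mulVec_one_mem_Icc hA0 hAP hP k
  rw [pow_succ_mulVec_one, mulVec, dotProduct, ← sum_row_of_mem_rowStochastic hP v]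
  refine Finset.sum_lt_sum (fun u _ => ?_) ⟨u, Finset.mem_univ u, ?_⟩
  · exact (mul_le_of_le_one_right (hA0 v u) (hle u).2).trans (hAP v u)
  · calc A v u * (A ^ k *ᵥ 1) u ≤ P v u * (A ^ k *ᵥ 1) u := by
          gcongr
          exacts [(hle u).1, hAP v u]
    _ < P v u := mul_lt_of_lt_one_right hvu hu

theorem pow_succ_mulVec_one_lt_one_of_pow_pos (hA0 : ∀ i j, 0 ≤ A i j)
    (hAP : ∀ i j, A i j ≤ P i j) (hP : P ∈ rowStochastic ℝ n) {k : ℕ} {v w : n}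
    (hvw : 0 < (P ^ k) v w) (hw : (A *ᵥ 1) w < 1) : (A ^ (k + 1) *ᵥ 1) v < 1 := by
  induction k generalizing v with
  | zero =>
    obtain rfl : v = w := by
      by_contra h
      simp [one_apply_ne h] at hvw
    simpa using hw
  | succ k ih =>
    have hP0 : ∀ i j, 0 ≤ P i j := fun _ _ => nonneg_of_mem_rowStochastic hP
    rw [pow_succ', mul_apply] at hvw
    obtain ⟨u, -, hu⟩ := (Finset.sum_pos_iff_of_nonneg fun u _ =>
      mul_nonneg (hP0 v u) (pow_apply_nonneg hP0 k u w)).mp hvw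
    exact pow_succ_mulVec_one_lt_one hA0 hAP hP
      (pos_of_mul_pos_left hu (pow_apply_nonneg hP0 k u w)) (ih (pos_of_mul_pos_right hu (hP0 v u)))

theorem exists_pow_succ_mulVec_one_lt_one (hA0 : ∀ i j, 0 ≤ A i j)
    (hAP : ∀ i j, A i j ≤ P i j) (hP : P ∈ rowStochastic ℝ n)
    (hconn : ∀ v, ∃ w k, (A *ᵥ 1) w < 1 ∧ 0 < (P ^ k) v w) :
    ∃ m, ∀ v, (A ^ (m + 1) *ᵥ 1) v < 1 := by
  choose w k hw hk using hconn
  refine ⟨Finset.univ.sup k, fun v => ?_⟩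
  have hanti : Antitone fun j => (A ^ j *ᵥ 1) v :=
    antitone_nat_of_succ_le fun j => pow_succ_mulVec_one_le hA0 hAP hP j v
  exact (hanti (Nat.succ_le_succ (Finset.le_sup (Finset.mem_univ v)))).trans_lt
    (pow_succ_mulVec_one_lt_one_of_pow_pos hA0 hAP hP (hk v) (hw v))

end Substochastic

section LinftyOpNormPow

attribute [local instance] Matrix.linftyOpNormedRing

variable {n : Type*} [Fintype n] [DecidableEq n] {A P : Matrix n n ℝ}

theorem summable_linfty_opNorm_pow (hA0 : ∀ i j, 0 ≤ A i j) (hAP : ∀ i j, A i j ≤ P i j)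
    (hP : P ∈ rowStochastic ℝ n) (hconn : ∀ v, ∃ w k, (A *ᵥ 1) w < 1 ∧ 0 < (P ^ k) v w) :
    Summable fun k => ‖A ^ k‖ := by
  obtain ⟨m, hm⟩ := exists_pow_succ_mulVec_one_lt_one hA0 hAP hP hconn
  refine summable_norm_pow_of_norm_pow_lt_one m.succ_pos
    (linfty_opNorm_lt_of_forall_sum_norm_lt one_pos _ fun v => ?_)
  simpa [mulVec, dotProduct, Real.norm_of_nonneg (pow_apply_nonneg hA0 _ v _)] using hm v

theorem summable_linfty_opNorm_transpose_pow (hA : Summable fun k => ‖A ^ k‖) :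
    Summable fun k => ‖Aᵀ ^ k‖ :=
  .of_nonneg_of_le (fun _ => norm_nonneg _)
    (fun k => by rw [← transpose_pow]; exact linfty_opNorm_transpose_le _) (hA.mul_left _)

end LinftyOpNormPow

theorem IsDiag.mul_apply {n α : Type*} [Fintype n] [NonUnitalNonAssocSemiring α]
    {Λ : Matrix n n α} (hΛ : Λ.IsDiag) (P : Matrix n n α) (i j : n) :
    (Λ * P) i j = Λ i i * P i j := by
  rw [Matrix.mul_apply, Finset.sum_eq_single i (fun k _ hk => by rw [hΛ hk.symm, zero_mul])
    (by simp)]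

end Matrix

attribute [local instance] Matrix.linftyOpNormedRing Matrix.linftyOpNormedSpace in
theorem stmt12_general (N : ℕ)
    (P Λ : Matrix (Fin N) (Fin N) ℝ)
    (hPnn : ∀ i j, 0 ≤ P i j)
    (hProw : ∀ i, ∑ j, P i j = 1)
    (hΛdiag : Λ.IsDiag)
    (hΛ : ∀ i, Λ i i ∈ Set.Icc (0 : ℝ) 1)
    (hconn : ∀ v : Fin N, ∃ (w : Fin N) (k : ℕ), Λ w w < 1 ∧ 0 < (P ^ k) v w) :
    ∃ Q : Matrix (Fin N) (Fin N) ℝ,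
      Q.IsSymm ∧
      (Λ * P)ᵀ * Q * (Λ * P) - Q = -(1 : Matrix (Fin N) (Fin N) ℝ) ∧
      Q.PosDef ∧
      (∀ i j, HasSum (fun k : ℕ => (((Λ * P)ᵀ) ^ k * (Λ * P) ^ k) i j) (Q i j)) ∧
      (∀ Q' : Matrix (Fin N) (Fin N) ℝ, Q'.IsSymm →
        (Λ * P)ᵀ * Q' * (Λ * P) - Q' = -(1 : Matrix (Fin N) (Fin N) ℝ) → Q' = Q) := by
  have hP : P ∈ rowStochastic ℝ (Fin N) := mem_rowStochastic_iff_sum.mpr ⟨hPnn, hProw⟩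
  have hrow : ∀ w, ((Λ * P) *ᵥ 1) w = Λ w w := fun w => by
    simp [mulVec, dotProduct, hΛdiag.mul_apply, ← Finset.mul_sum, hProw]
  have hA : Summable fun k => ‖(Λ * P) ^ k‖ := summable_linfty_opNorm_pow
    (fun i j => by rw [hΛdiag.mul_apply]; exact mul_nonneg (hΛ i).1 (hPnn i j))
    (fun i j => by rw [hΛdiag.mul_apply]; exact mul_le_of_le_one_left (hPnn i j) (hΛ i).2) hP
    (fun v => by simpa only [hrow] using hconn v)
  have hAt := summable_linfty_opNorm_transpose_pow hA
  obtain ⟨Q, hQ⟩ := summable_pow_mul_pow hA hAt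
  have hlyap := mul_mul_sub_eq_neg_one_of_hasSum hQ
  have huniq : ∀ X, (Λ * P)ᵀ * X * (Λ * P) - X = -1 → X = Q := fun X hX =>
    eq_of_mul_mul_sub_eq_neg_one hQ hX
      (tendsto_pow_mul_mul_pow_nhds_zero hA.tendsto_atTop_zero hAt.tendsto_atTop_zero X)
  refine ⟨Q, huniq _ ?_, hlyap, ?_, fun i j => Pi.hasSum.mp (Pi.hasSum.mp hQ i) j,
    fun X _ hX => huniq X hX⟩
  · simpa [transpose_mul, mul_assoc] using congrArg transpose hlyap
  · exact posDef_of_hasSum_conjTranspose_pow_mul_pow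
      (by rw [conjTranspose_eq_transpose_of_trivial]; exact hQ)

/-- Discrete-time Lyapunov equation for the opinion dynamics: under Assumption 1,
there exists a unique symmetric matrix `Q` with `(Λ P)ᵀ Q (Λ P) - Q = -I`; this `Q`
is positive definite and is given (entrywise) by the convergent series
`Q = ∑_{k=0}^∞ ((Λ P)ᵀ)^k (Λ P)^k`. -/
theorem stmt12 (N : ℕ) (hN : 1 ≤ N)
    (P Λ : Matrix (Fin N) (Fin N) ℝ)
    (hPnn : ∀ i j, 0 ≤ P i j)
    (hProw : ∀ i, ∑ j, P i j = 1)
    (hΛdiag : Λ.IsDiag)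
    (hΛ : ∀ i, Λ i i ∈ Set.Icc (0 : ℝ) 1)
    (hconn : ∀ v : Fin N, ∃ (w : Fin N) (k : ℕ), Λ w w < 1 ∧ 0 < (P ^ k) v w) :
    ∃ Q : Matrix (Fin N) (Fin N) ℝ,
      Q.IsSymm ∧
      (Λ * P)ᵀ * Q * (Λ * P) - Q = -(1 : Matrix (Fin N) (Fin N) ℝ) ∧
      Q.PosDef ∧
      (∀ i j, HasSum (fun k : ℕ => (((Λ * P)ᵀ) ^ k * (Λ * P) ^ k) i j) (Q i j)) ∧
      (∀ Q' : Matrix (Fin N) (Fin N) ℝ, Q'.IsSymm →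
        (Λ * P)ᵀ * Q' * (Λ * P) - Q' = -(1 : Matrix (Fin N) (Fin N) ℝ) → Q' = Q) :=
  stmt12_general N P Λ hPnn hProw hΛdiag hΛ hconn
end
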